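/- arXiv:2106.15966 — 6 statements merged into one kernel-verified Lean document; each statement's English description precedes it below -/
import Mathlib

section
/- Let m ≥ 1, let Ψ : ℝ^m → [0,∞) be any nonnegative function, and let Φ : ℝ × ℝ^m → ℂ be such that for every z ∈ ℝ^m the map s ↦ Φ(s; z) is C¹ on ℝ. Suppose C₀ > 0 is such that for every N ∈ ℤ, every z ∈ ℝ^m and every s ∈ [1/4, 1] one has |Φ(2^N s; z)| ≤ C₀ and |d/ds [Φ(2^N s; z)]| ≤ C₀. Then there exists a constant C > 0, depending only on C₀ and φ, such that for each sign σ ∈ {+1, −1}, every t ∈ ℝ and every N ∈ ℤ, sup_{z ∈ ℝ^m} | ∫₀^∞ e^{−i t 2^{4N} s⁴} φ₀(s) e^{σ i 2^N s Ψ(z)} Φ(2^N s; z) ds | ≤ C (1 + |t| · 2^{4N})^{−1/2}. -/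
open MeasureTheory Set

open intervalIntegral Complex


noncomputable def phs (A B : ℝ) (s : ℝ) : ℂ := Complex.exp (Complex.I * ((B*s - A*s^4 : ℝ) : ℂ))

def hfun (A B : ℝ) (s : ℝ) : ℝ := B - 4*A*s^3

lemma hfun_cont (A B : ℝ) : Continuous (hfun A B) := by
  unfold hfun; fun_prop

lemma hfun_hasDeriv (A B s : ℝ) : HasDerivAt (hfun A B) (-(12*A*s^2)) s := by
  have h1 : HasDerivAt (fun s : ℝ => B - 4*A*s^3) (0 - 4*A*(3*s^(3-1))) s :=
    (hasDerivAt_const s B).sub ((hasDerivAt_pow 3 s).const_mul (4*A))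
  have h2 : (0 : ℝ) - 4*A*(3*s^(3-1)) = -(12*A*s^2) := by norm_num; ring
  rw [h2] at h1
  exact h1

lemma phs_norm (A B s : ℝ) : ‖phs A B s‖ = 1 := by
  unfold phs
  rw [mul_comm, Complex.norm_exp_ofReal_mul_I]

lemma phs_cont (A B : ℝ) : Continuous (phs A B) := by
  unfold phs; fun_prop

lemma phs_hasDeriv (A B s : ℝ) :
    HasDerivAt (phs A B) (Complex.I * ((hfun A B s : ℝ) : ℂ) * phs A B s) s := by
  have hψ : HasDerivAt (fun s : ℝ => B*s - A*s^4) (hfun A B s) s := by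
    have h1 : HasDerivAt (fun s : ℝ => B*s - A*s^4) (B*1 - A*(4*s^(4-1))) s :=
      ((hasDerivAt_id s).const_mul B).sub ((hasDerivAt_pow 4 s).const_mul A)
    have h2 : B*1 - A*(4*s^(4-1)) = hfun A B s := by unfold hfun; norm_num; ring
    rw [h2] at h1; exact h1
  have h1 : HasDerivAt (fun s : ℝ => Complex.I * ((B*s - A*s^4 : ℝ) : ℂ))
      (Complex.I * ((hfun A B s : ℝ) : ℂ)) s := (hψ.ofReal_comp.const_mul Complex.I)
  have h3 := h1.cexp
  unfold phs
  convert h3 using 1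
  ring

/-- Non-stationary phase estimate via integration by parts. -/
lemma nonstat (A B ρ : ℝ) (hA : 0 ≤ A) (hρ : 0 < ρ)
    (a b : ℝ) (hab : a ≤ b)
    (g : ℝ → ℂ) (hg : ContDiff ℝ 1 g)
    (M M' : ℝ)
    (hM : ∀ s ∈ Icc a b, ‖g s‖ ≤ M)
    (hM' : ∀ s ∈ Icc a b, ‖deriv g s‖ ≤ M')
    (hsign : (∀ s ∈ Icc a b, ρ ≤ hfun A B s) ∨ (∀ s ∈ Icc a b, hfun A B s ≤ -ρ)) :
    ‖∫ s in a..b, phs A B s * g s‖ ≤ (4*M + (b-a)*M') / ρ := by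
  have haI : a ∈ Icc a b := ⟨le_refl a, hab⟩
  have hbI : b ∈ Icc a b := ⟨hab, le_refl b⟩
  have hM0 : 0 ≤ M := le_trans (norm_nonneg _) (hM a haI)
  have hM'0 : 0 ≤ M' := le_trans (norm_nonneg _) (hM' a haI)
  have hρh : ∀ s ∈ Icc a b, ρ ≤ |hfun A B s| := by
    intro s hs
    rcases hsign with H | H
    · exact le_trans (H s hs) (le_abs_self _)
    · have h1 := H s hs
      have h2 := neg_le_abs (hfun A B s)
      linarith
  have hne : ∀ s ∈ Icc a b, hfun A B s ≠ 0 := by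
    intro s hs h0
    have := hρh s hs
    rw [h0] at this; simp at this; linarith
  have hIne : ∀ s ∈ Icc a b, (Complex.I * ((hfun A B s : ℝ) : ℂ)) ≠ 0 := fun s hs => by
    simp [Complex.I_ne_zero, Complex.ofReal_ne_zero, hne s hs]
  have hgd : Differentiable ℝ g := hg.differentiable one_ne_zero
  have hgdc : Continuous (deriv g) := hg.continuous_deriv le_rfl
  have hhC : Continuous (hfun A B) := hfun_cont A B
  have hh'C : Continuous (fun s : ℝ => -(12*A*s^2)) := by fun_prop
  set u : ℝ → ℂ := fun s => g s / (Complex.I * ((hfun A B s : ℝ) : ℂ)) with hu_def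
  set u' : ℝ → ℂ := fun s =>
    (deriv g s * (Complex.I * ((hfun A B s : ℝ) : ℂ))
      - g s * (Complex.I * ((-(12*A*s^2) : ℝ) : ℂ)))
      / (Complex.I * ((hfun A B s : ℝ) : ℂ))^2 with hu'_def
  have hu : ∀ s ∈ Icc a b, HasDerivAt u (u' s) s := by
    intro s hs
    exact (hgd s).hasDerivAt.div (((hfun_hasDeriv A B s).ofReal_comp).const_mul Complex.I)
      (hIne s hs)
  have hIcc : uIcc a b = Icc a b := uIcc_of_le hab
  have hcont_aux : Continuous (fun s : ℝ => Complex.I * ((hfun A B s : ℝ) : ℂ)) :=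
    continuous_const.mul (Complex.continuous_ofReal.comp hhC)
  have hcont_aux2 : Continuous (fun s : ℝ => Complex.I * (((-(12*A*s^2)) : ℝ) : ℂ)) :=
    continuous_const.mul (Complex.continuous_ofReal.comp hh'C)
  have hu'cont : ContinuousOn u' (Icc a b) := by
    apply ContinuousOn.div
    · exact ((hgdc.mul hcont_aux).sub (hgd.continuous.mul hcont_aux2)).continuousOn
    · exact (hcont_aux.pow 2).continuousOn
    · intro s hs; exact pow_ne_zero 2 (hIne s hs)
  have hInt_u' : IntervalIntegrable u' volume a b := by
    apply ContinuousOn.intervalIntegrable; rwa [hIcc]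
  have hInt_v' : IntervalIntegrable
      (fun s => Complex.I * ((hfun A B s : ℝ) : ℂ) * phs A B s) volume a b :=
    (hcont_aux.mul (phs_cont A B)).intervalIntegrable a b
  have hIBP : ∫ s in a..b, u s * (Complex.I * ((hfun A B s : ℝ) : ℂ) * phs A B s)
      = u b * phs A B b - u a * phs A B a - ∫ s in a..b, u' s * phs A B s := by
    apply intervalIntegral.integral_mul_deriv_eq_deriv_mul
    · intro x hx; rw [hIcc] at hx; exact hu x hx
    · intro x _; exact phs_hasDeriv A B x
    · exact hInt_u'
    · exact hInt_v'
  have key : ∫ s in a..b, phs A B s * g s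
      = ∫ s in a..b, u s * (Complex.I * ((hfun A B s : ℝ) : ℂ) * phs A B s) := by
    apply intervalIntegral.integral_congr
    intro s hs; rw [hIcc] at hs
    show phs A B s * g s = g s / (Complex.I * ((hfun A B s : ℝ) : ℂ)) * _
    field_simp [Complex.I_ne_zero, Complex.ofReal_ne_zero.mpr (hne s hs)]
  -- norm of u at points
  have hunorm : ∀ s ∈ Icc a b, ‖u s‖ ≤ M / ρ := by
    intro s hs
    have h1 : ‖u s‖ = ‖g s‖ / |hfun A B s| := by
      rw [hu_def]
      simp [Real.norm_eq_abs]
    rw [h1]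
    exact div_le_div₀ hM0 (hM s hs) hρ (hρh s hs)
  -- pointwise bound on ‖u'‖
  have hu'bound : ∀ s ∈ Icc a b, ‖u' s‖ ≤ M'/ρ + M * (12*A*s^2/(hfun A B s)^2) := by
    intro s hs
    have habs : |hfun A B s| > 0 := lt_of_lt_of_le hρ (hρh s hs)
    have h1 : ‖u' s‖ = ‖deriv g s * (Complex.I * ((hfun A B s : ℝ) : ℂ))
        - g s * (Complex.I * ((-(12*A*s^2) : ℝ) : ℂ))‖ / |hfun A B s|^2 := by
      rw [hu'_def]
      simp [Real.norm_eq_abs]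
    rw [h1]
    have h2 : ‖deriv g s * (Complex.I * ((hfun A B s : ℝ) : ℂ))
        - g s * (Complex.I * ((-(12*A*s^2) : ℝ) : ℂ))‖
        ≤ ‖deriv g s‖ * |hfun A B s| + ‖g s‖ * (12*A*s^2) := by
      have e1 : ‖deriv g s * (Complex.I * ((hfun A B s : ℝ) : ℂ))‖
          = ‖deriv g s‖ * |hfun A B s| := by
        simp [Real.norm_eq_abs]
      have e2 : ‖g s * (Complex.I * ((-(12*A*s^2) : ℝ) : ℂ))‖ = ‖g s‖ * (12*A*s^2) := by
        simp [Real.norm_eq_abs, _root_.abs_of_nonneg (show (0:ℝ) ≤ 12*A*s^2 by positivity)]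
        exact Or.inl (Or.inl hA)
      calc _ ≤ _ := norm_sub_le _ _
        _ = _ := by rw [e1, e2]
    have h3 : (‖deriv g s‖ * |hfun A B s| + ‖g s‖ * (12*A*s^2)) / |hfun A B s|^2
        ≤ M'/ρ + M * (12*A*s^2/(hfun A B s)^2) := by
      rw [add_div]
      gcongr ?_ + ?_
      · have : ‖deriv g s‖ * |hfun A B s| / |hfun A B s|^2 = ‖deriv g s‖ / |hfun A B s| := by
          rw [pow_two]
          rw [mul_div_mul_right _ _ (ne_of_gt habs)]
        rw [this]
        exact div_le_div₀ hM'0 (hM' s hs) hρ (hρh s hs)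
      · rw [← _root_.sq_abs (hfun A B s), mul_div_assoc]
        exact mul_le_mul_of_nonneg_right (hM s hs) (by positivity)
    calc _ ≤ (‖deriv g s‖ * |hfun A B s| + ‖g s‖ * (12*A*s^2)) / |hfun A B s|^2 := by
            gcongr
      _ ≤ _ := h3
  -- FTC for the inverse of the phase derivative
  have hinv : ∀ x ∈ uIcc a b, HasDerivAt (fun s => (hfun A B s)⁻¹)
      (12*A*x^2/(hfun A B x)^2) x := by
    intro x hx; rw [hIcc] at hx
    have h4 : HasDerivAt (fun s => (hfun A B s)⁻¹) (-(-(12*A*x^2)) / (hfun A B x)^2) x :=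
      (hfun_hasDeriv A B x).inv (hne x hx)
    convert h4 using 1
    ring
  have hcont_f' : ContinuousOn (fun s => 12*A*s^2/(hfun A B s)^2) (Icc a b) := by
    apply ContinuousOn.div
    · fun_prop
    · exact (hhC.pow 2).continuousOn
    · intro x hx; exact pow_ne_zero 2 (hne x hx)
  have hint_f' : IntervalIntegrable (fun s => 12*A*s^2/(hfun A B s)^2) volume a b := by
    apply ContinuousOn.intervalIntegrable; rwa [hIcc]
  have hFTC : ∫ s in a..b, 12*A*s^2/(hfun A B s)^2 = (hfun A B b)⁻¹ - (hfun A B a)⁻¹ :=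
    intervalIntegral.integral_eq_sub_of_hasDerivAt hinv hint_f'
  have hinvbd : ∀ s ∈ Icc a b, |(hfun A B s)⁻¹| ≤ 1/ρ := by
    intro s hs
    rw [abs_inv, one_div]
    exact inv_anti₀ hρ (hρh s hs)
  have hIbd : ∫ s in a..b, 12*A*s^2/(hfun A B s)^2 ≤ 2/ρ := by
    rw [hFTC]
    have h5 := hinvbd a haI
    have h6 := hinvbd b hbI
    have h7 := le_abs_self (hfun A B b)⁻¹
    have h8 := neg_abs_le (hfun A B a)⁻¹
    have : (2:ℝ)/ρ = 1/ρ + 1/ρ := by ring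
    linarith
  have hbnd_int : ‖∫ s in a..b, u' s * phs A B s‖ ≤ (b-a)*(M'/ρ) + M*(2/ρ) := by
    have h0 : ‖∫ s in a..b, u' s * phs A B s‖ ≤ ∫ s in a..b, ‖u' s * phs A B s‖ :=
      intervalIntegral.norm_integral_le_integral_norm hab
    have hint1 : IntervalIntegrable (fun s => ‖u' s * phs A B s‖) volume a b := by
      apply ContinuousOn.intervalIntegrable
      rw [hIcc]
      exact (hu'cont.mul (phs_cont A B).continuousOn).norm
    have hbig : IntervalIntegrable (fun s => M'/ρ + M*(12*A*s^2/(hfun A B s)^2)) volume a b := by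
      apply ContinuousOn.intervalIntegrable
      rw [hIcc]
      exact continuousOn_const.add (continuousOn_const.mul hcont_f')
    have hmono : ∫ s in a..b, ‖u' s * phs A B s‖
        ≤ ∫ s in a..b, (M'/ρ + M*(12*A*s^2/(hfun A B s)^2)) := by
      apply intervalIntegral.integral_mono_on hab hint1 hbig
      intro s hs
      rw [norm_mul, phs_norm, mul_one]
      exact hu'bound s hs
    have hsplit : ∫ s in a..b, (M'/ρ + M*(12*A*s^2/(hfun A B s)^2))
        = (b-a)*(M'/ρ) + M * ∫ s in a..b, 12*A*s^2/(hfun A B s)^2 := by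
      rw [intervalIntegral.integral_add intervalIntegrable_const (hint_f'.const_mul M),
        intervalIntegral.integral_const, intervalIntegral.integral_const_mul]
      simp [smul_eq_mul]
    have hlast : M * ∫ s in a..b, 12*A*s^2/(hfun A B s)^2 ≤ M * (2/ρ) :=
      mul_le_mul_of_nonneg_left hIbd hM0
    rw [hsplit] at hmono
    linarith
  have hb1 : ‖u b * phs A B b‖ ≤ M/ρ := by
    rw [norm_mul, phs_norm, mul_one]; exact hunorm b hbI
  have ha1 : ‖u a * phs A B a‖ ≤ M/ρ := by
    rw [norm_mul, phs_norm, mul_one]; exact hunorm a haI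
  rw [key, hIBP]
  calc ‖u b * phs A B b - u a * phs A B a - ∫ s in a..b, u' s * phs A B s‖
      ≤ ‖u b * phs A B b - u a * phs A B a‖ + ‖∫ s in a..b, u' s * phs A B s‖ :=
        norm_sub_le _ _
    _ ≤ (M/ρ + M/ρ) + ((b-a)*(M'/ρ) + M*(2/ρ)) := by
        have h9 := norm_sub_le (u b * phs A B b) (u a * phs A B a)
        linarith
    _ = (4*M + (b-a)*M')/ρ := by
        field_simp
        ring

noncomputable def cb (u : ℝ) : ℝ := max (1/4) (min 1 ((max u 0) ^ ((1:ℝ)/3)))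

lemma cb_ge (u : ℝ) : 1/4 ≤ cb u := le_max_left _ _

lemma cb_le (u : ℝ) : cb u ≤ 1 := max_le (by norm_num) (min_le_left _ _)

lemma cb_mono {u v : ℝ} (h : u ≤ v) : cb u ≤ cb v := by
  apply max_le_max le_rfl
  apply min_le_min le_rfl
  exact Real.rpow_le_rpow (le_max_right u 0) (max_le_max h le_rfl) (by norm_num)

lemma cb_cube (u : ℝ) : (cb u)^3 = max (1/64) (min 1 (max u 0)) := by
  have hm : Monotone (fun x : ℝ => x^3) := (Odd.strictMono_pow (by decide)).monotone
  have hx : (0:ℝ) ≤ max u 0 := le_max_right u 0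
  have hr : ((max u 0) ^ ((1:ℝ)/3))^3 = max u 0 := by
    rw [← Real.rpow_natCast ((max u 0) ^ ((1:ℝ)/3)) 3, ← Real.rpow_mul hx]
    norm_num
  calc (cb u)^3 = max ((1/4:ℝ)^3) (min ((1:ℝ)^3) (((max u 0) ^ ((1:ℝ)/3))^3)) := by
        rw [cb, hm.map_max, hm.map_min]
    _ = _ := by rw [hr]; norm_num

lemma cb_cube_diff {u v : ℝ} (h : u ≤ v) : (cb v)^3 - (cb u)^3 ≤ v - u := by
  rw [cb_cube, cb_cube]
  have h1 : |max (1/64) (min 1 (max v 0)) - max (1/64) (min 1 (max u 0))|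
      ≤ |min 1 (max v 0) - min 1 (max u 0)| := by
    have := abs_max_sub_max_le_max (1/64:ℝ) (min 1 (max v 0)) (1/64) (min 1 (max u 0))
    simpa using this
  have h2 : |min 1 (max v 0) - min 1 (max u 0)| ≤ |max v 0 - max u 0| := by
    have := abs_min_sub_min_le_max (1:ℝ) (max v 0) 1 (max u 0)
    simpa using this
  have h3 : |max v 0 - max u 0| ≤ |v - u| := by
    have := abs_max_sub_max_le_abs v u (0:ℝ)
    simpa using this
  have h4 := le_trans (le_abs_self _) (h1.trans (h2.trans h3))
  rwa [_root_.abs_of_nonneg (by linarith)] at h4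

lemma cb_lower {u : ℝ} (h : 1/4 < cb u) : (cb u)^3 ≤ u := by
  have hx : (0:ℝ) ≤ max u 0 := le_max_right u 0
  set x := (max u 0) ^ ((1:ℝ)/3) with hx_def
  have hr : x^3 = max u 0 := by
    rw [hx_def, ← Real.rpow_natCast ((max u 0) ^ ((1:ℝ)/3)) 3, ← Real.rpow_mul hx]
    norm_num
  have hmin : 1/4 < min 1 x := by
    by_contra hc
    push_neg at hc
    rw [cb, max_eq_left hc] at h
    exact lt_irrefl _ h
  have hcb : cb u = min 1 x := max_eq_right hmin.le
  have hcx : cb u ≤ x := hcb ▸ min_le_right 1 x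
  have hcb0 : 0 ≤ cb u := le_trans (by norm_num) (cb_ge u)
  have h5 : (cb u)^3 ≤ x^3 := pow_le_pow_left₀ hcb0 hcx 3
  have hxgt : 1/4 < x := lt_of_lt_of_le hmin (min_le_right 1 x)
  have h6 : (1/64 : ℝ) < max u 0 := by
    rw [← hr]
    have := pow_lt_pow_left₀ hxgt (by norm_num : (0:ℝ) ≤ 1/4) (by norm_num : 3 ≠ 0)
    calc (1/64:ℝ) = (1/4)^3 := by norm_num
      _ < x^3 := this
  have hu0 : 0 < u := by
    rcases le_or_gt u 0 with hu | hu
    · rw [max_eq_right hu] at h6; linarith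
    · exact hu
  have h7 : max u 0 = u := max_eq_left hu0.le
  rw [hr, h7] at h5
  exact h5

lemma cb_upper {u : ℝ} (h : cb u < 1) : u ≤ (cb u)^3 := by
  have hx : (0:ℝ) ≤ max u 0 := le_max_right u 0
  set x := (max u 0) ^ ((1:ℝ)/3) with hx_def
  have hr : x^3 = max u 0 := by
    rw [hx_def, ← Real.rpow_natCast ((max u 0) ^ ((1:ℝ)/3)) 3, ← Real.rpow_mul hx]
    norm_num
  have hxlt : x < 1 := by
    by_contra hc
    push_neg at hc
    rw [cb, min_eq_left hc, max_eq_right (by norm_num : (1/4:ℝ) ≤ 1)] at h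
    exact lt_irrefl _ h
  have hcb : cb u = max (1/4) x := by rw [cb, min_eq_right hxlt.le]
  have hcx : x ≤ cb u := hcb ▸ le_max_right _ _
  have hx0 : 0 ≤ x := Real.rpow_nonneg hx _
  have h5 : x^3 ≤ (cb u)^3 := pow_le_pow_left₀ hx0 hcx 3
  rw [hr] at h5
  exact le_trans (le_max_left u 0) h5

set_option maxHeartbeats 1000000 in
/-- Main stationary phase estimate on [1/4, 1] for `A ≥ 1`. -/
lemma core (A B : ℝ) (hA : 1 ≤ A) (g : ℝ → ℂ) (hg : ContDiff ℝ 1 g)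
    (M M' : ℝ)
    (hM : ∀ s ∈ Icc (1/4:ℝ) 1, ‖g s‖ ≤ M)
    (hM' : ∀ s ∈ Icc (1/4:ℝ) 1, ‖deriv g s‖ ≤ M') :
    ‖∫ s in (1/4:ℝ)..1, phs A B s * g s‖ ≤ (11*M + 2*M') / Real.sqrt A := by
  have hA0 : 0 < A := by linarith
  have hM0 : 0 ≤ M := le_trans (norm_nonneg _) (hM (1/2) (by norm_num))
  have hM'0 : 0 ≤ M' := le_trans (norm_nonneg _) (hM' (1/2) (by norm_num))
  set ρ := Real.sqrt A with hρ_def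
  have hρ : 0 < ρ := Real.sqrt_pos.mpr hA0
  have hρ2 : ρ^2 = A := Real.sq_sqrt hA0.le
  have hρ1 : 1 ≤ ρ := by nlinarith
  set u₁ := (B - ρ)/(4*A) with hu₁_def
  set u₂ := (B + ρ)/(4*A) with hu₂_def
  have hu12 : u₁ ≤ u₂ := by
    rw [hu₁_def, hu₂_def]
    gcongr
    linarith
  set α := cb u₁ with hα_def
  set β := cb u₂ with hβ_def
  have hα1 : 1/4 ≤ α := cb_ge u₁
  have hαβ : α ≤ β := cb_mono hu12
  have hβ1 : β ≤ 1 := cb_le u₂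
  have hα2 : α ≤ 1 := hαβ.trans hβ1
  have hβ2 : 1/4 ≤ β := hα1.trans hαβ
  -- length of the middle interval
  have hlen : β - α ≤ (8/3)/ρ := by
    have h1 : β^3 - α^3 ≤ u₂ - u₁ := cb_cube_diff hu12
    have h2 : u₂ - u₁ = 1/(2*ρ) := by
      rw [hu₂_def, hu₁_def, ← hρ2]
      field_simp
      ring
    have e : β^3 - α^3 = (β-α)*(β^2+α*β+α^2) := by ring
    have hsum : (3/16:ℝ) ≤ β^2+α*β+α^2 := by nlinarith
    have h3 : (β-α) * (3/16) ≤ β^3 - α^3 := by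
      rw [e]
      exact mul_le_mul_of_nonneg_left hsum (sub_nonneg.mpr hαβ)
    rw [h2] at h1
    have h4 : (β-α)*(3/16)*ρ ≤ (1/(2*ρ))*ρ :=
      mul_le_mul_of_nonneg_right (h3.trans h1) hρ.le
    have h5 : (1/(2*ρ))*ρ = 1/2 := by field_simp
    rw [le_div_iff₀ hρ]
    nlinarith
  -- continuity and splitting
  have hcont : Continuous (fun s => phs A B s * g s) := (phs_cont A B).mul hg.continuous
  have hint : ∀ (a b : ℝ), IntervalIntegrable (fun s => phs A B s * g s) volume a b :=
    fun a b => hcont.intervalIntegrable a b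
  have hsplit : ∫ s in (1/4:ℝ)..1, phs A B s * g s
      = ((∫ s in (1/4:ℝ)..α, phs A B s * g s) + (∫ s in α..β, phs A B s * g s))
        + (∫ s in β..(1:ℝ), phs A B s * g s) := by
    rw [intervalIntegral.integral_add_adjacent_intervals (hint _ _) (hint _ _),
      intervalIntegral.integral_add_adjacent_intervals (hint _ _) (hint _ _)]
  have hP1 : ‖∫ s in (1/4:ℝ)..α, phs A B s * g s‖ ≤ (4*M + (3/4)*M')/ρ := by
    rcases eq_or_lt_of_le hα1 with heq | hlt
    · rw [← heq, intervalIntegral.integral_same]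
      simp only [norm_zero]
      positivity
    · have hsub : Icc (1/4:ℝ) α ⊆ Icc (1/4:ℝ) 1 := Icc_subset_Icc le_rfl hα2
      have hsign : ∀ s ∈ Icc (1/4:ℝ) α, ρ ≤ hfun A B s := by
        intro s hs
        have hs0 : (0:ℝ) ≤ s := le_trans (by norm_num) hs.1
        have hs3 : s^3 ≤ α^3 := pow_le_pow_left₀ hs0 hs.2 3
        have hcu : α^3 ≤ u₁ := cb_lower hlt
        have h4A : 4*A*u₁ = B - ρ := by rw [hu₁_def]; field_simp
        have h4s : 4*A*s^3 ≤ B - ρ := by nlinarith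
        show ρ ≤ B - 4*A*s^3
        linarith
      have h6 := nonstat A B ρ hA0.le hρ (1/4) α hα1 g hg M M'
        (fun s hs => hM s (hsub hs)) (fun s hs => hM' s (hsub hs)) (Or.inl hsign)
      refine h6.trans ?_
      rw [div_le_div_iff_of_pos_right hρ]
      exact add_le_add le_rfl (mul_le_mul_of_nonneg_right (by linarith) hM'0)
  have hP3 : ‖∫ s in β..(1:ℝ), phs A B s * g s‖ ≤ (4*M + (3/4)*M')/ρ := by
    rcases eq_or_lt_of_le hβ1 with heq | hlt
    · rw [heq, intervalIntegral.integral_same]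
      simp only [norm_zero]
      positivity
    · have hsub : Icc β (1:ℝ) ⊆ Icc (1/4:ℝ) 1 := Icc_subset_Icc hβ2 le_rfl
      have hsign : ∀ s ∈ Icc β (1:ℝ), hfun A B s ≤ -ρ := by
        intro s hs
        have hβ0 : (0:ℝ) ≤ β := le_trans (by norm_num) hβ2
        have hs3 : β^3 ≤ s^3 := pow_le_pow_left₀ hβ0 hs.1 3
        have hcu : u₂ ≤ β^3 := cb_upper hlt
        have h4A : 4*A*u₂ = B + ρ := by rw [hu₂_def]; field_simp
        have h4s : B + ρ ≤ 4*A*s^3 := by nlinarith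
        show B - 4*A*s^3 ≤ -ρ
        linarith
      have h6 := nonstat A B ρ hA0.le hρ β 1 hβ1 g hg M M'
        (fun s hs => hM s (hsub hs)) (fun s hs => hM' s (hsub hs)) (Or.inr hsign)
      refine h6.trans ?_
      rw [div_le_div_iff_of_pos_right hρ]
      exact add_le_add le_rfl (mul_le_mul_of_nonneg_right (by linarith) hM'0)
  have hP2 : ‖∫ s in α..β, phs A B s * g s‖ ≤ M * ((8/3)/ρ) := by
    have h1 : ∀ x ∈ uIoc α β, ‖phs A B x * g x‖ ≤ M := by
      intro x hx
      rw [uIoc_of_le hαβ] at hx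
      have hx' : x ∈ Icc (1/4:ℝ) 1 := ⟨le_trans hα1 hx.1.le, hx.2.trans hβ1⟩
      rw [norm_mul, phs_norm, one_mul]
      exact hM x hx'
    have h2 := intervalIntegral.norm_integral_le_of_norm_le_const h1
    rw [_root_.abs_of_nonneg (sub_nonneg.mpr hαβ)] at h2
    calc _ ≤ M * (β - α) := h2
      _ ≤ M * ((8/3)/ρ) := mul_le_mul_of_nonneg_left hlen hM0
  rw [hsplit]
  have hmid : M * ((8/3)/ρ) = ((8/3)*M)/ρ := by ring
  calc ‖_ + _‖ ≤ ‖(∫ s in (1/4:ℝ)..α, phs A B s * g s) + (∫ s in α..β, phs A B s * g s)‖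
        + ‖∫ s in β..(1:ℝ), phs A B s * g s‖ := norm_add_le _ _
    _ ≤ (‖∫ s in (1/4:ℝ)..α, phs A B s * g s‖ + ‖∫ s in α..β, phs A B s * g s‖)
        + ‖∫ s in β..(1:ℝ), phs A B s * g s‖ := by
        gcongr
        exact norm_add_le _ _
    _ ≤ ((4*M + (3/4)*M')/ρ + ((8/3)*M)/ρ) + (4*M + (3/4)*M')/ρ := by
        rw [← hmid]
        gcongr
    _ = (4*M + (3/4)*M' + (8/3)*M + (4*M + (3/4)*M'))/ρ := by
        rw [← add_div, ← add_div]
    _ ≤ (11*M + 2*M') / ρ := by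
        rw [div_le_div_iff_of_pos_right hρ]
        linarith

/-- Stationary phase estimate for `|A| ≥ 1`, any sign. -/
lemma core2 (A B : ℝ) (hA : 1 ≤ |A|) (g : ℝ → ℂ) (hg : ContDiff ℝ 1 g)
    (M M' : ℝ)
    (hM : ∀ s ∈ Icc (1/4:ℝ) 1, ‖g s‖ ≤ M)
    (hM' : ∀ s ∈ Icc (1/4:ℝ) 1, ‖deriv g s‖ ≤ M') :
    ‖∫ s in (1/4:ℝ)..1, phs A B s * g s‖ ≤ (11*M + 2*M') / Real.sqrt |A| := by
  rcases abs_cases A with ⟨h1, _⟩ | ⟨h1, h2⟩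
  · rw [h1] at hA ⊢
    exact core A B hA g hg M M' hM hM'
  · -- A < 0 : conjugate
    rw [h1] at hA ⊢
    set L : ℂ →L[ℝ] ℂ := Complex.conjCLE.toContinuousLinearMap with hL_def
    have hLg : ∀ w : ℂ, L w = (starRingEnd ℂ) w := fun w => rfl
    set gc : ℝ → ℂ := fun s => L (g s) with hgc_def
    have hgc : ContDiff ℝ 1 gc := L.contDiff.comp hg
    have hMgc : ∀ s ∈ Icc (1/4:ℝ) 1, ‖gc s‖ ≤ M := by
      intro s hs
      rw [hgc_def]
      simp only [hLg]
      rw [RCLike.norm_conj]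
      exact hM s hs
    have hM'gc : ∀ s ∈ Icc (1/4:ℝ) 1, ‖deriv gc s‖ ≤ M' := by
      intro s hs
      have hd : HasDerivAt gc (L (deriv g s)) s :=
        L.hasFDerivAt.comp_hasDerivAt s ((hg.differentiable one_ne_zero) s).hasDerivAt
      rw [hd.deriv, hLg, RCLike.norm_conj]
      exact hM' s hs
    have hcomm : ∫ s in (1/4:ℝ)..1, L (phs A B s * g s)
        = L (∫ s in (1/4:ℝ)..1, phs A B s * g s) := by
      apply ContinuousLinearMap.intervalIntegral_comp_comm
      exact ((phs_cont A B).mul hg.continuous).intervalIntegrable _ _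
    have hptwise : ∀ s : ℝ, L (phs A B s * g s) = phs (-A) (-B) s * gc s := by
      intro s
      rw [hLg, map_mul]
      congr 1
      unfold phs
      rw [← Complex.exp_conj]
      congr 1
      rw [map_mul, Complex.conj_I, Complex.conj_ofReal]
      push_cast
      ring
    have hnorm : ‖∫ s in (1/4:ℝ)..1, phs A B s * g s‖
        = ‖∫ s in (1/4:ℝ)..1, phs (-A) (-B) s * gc s‖ := by
      rw [show (∫ s in (1/4:ℝ)..1, phs (-A) (-B) s * gc s)
          = ∫ s in (1/4:ℝ)..1, L (phs A B s * g s) by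
        apply intervalIntegral.integral_congr
        intro s _
        exact (hptwise s).symm]
      rw [hcomm, hLg, RCLike.norm_conj]
    rw [hnorm]
    exact core (-A) (-B) hA gc hgc M M' hMgc hM'gc

/-- Trivial bound. -/
lemma trivbd (A B : ℝ) (g : ℝ → ℂ) (M : ℝ)
    (hM : ∀ s ∈ Icc (1/4:ℝ) 1, ‖g s‖ ≤ M) :
    ‖∫ s in (1/4:ℝ)..1, phs A B s * g s‖ ≤ M := by
  have h1 : ∀ x ∈ uIoc (1/4:ℝ) 1, ‖phs A B x * g x‖ ≤ M := by
    intro x hx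
    rw [uIoc_of_le (by norm_num : (1/4:ℝ) ≤ 1)] at hx
    rw [norm_mul, phs_norm, one_mul]
    exact hM x ⟨hx.1.le, hx.2⟩
  have h2 := intervalIntegral.norm_integral_le_of_norm_le_const h1
  have hM0 : 0 ≤ M := le_trans (norm_nonneg _) (hM (1/2) (by norm_num))
  calc _ ≤ M * |(1:ℝ) - 1/4| := h2
    _ ≤ M := by rw [show |(1:ℝ) - 1/4| = 3/4 by norm_num]; linarith

/-- Combination: interpolate the two bounds into the `(1+x)^(-1/2)` form. -/
lemma combine (x K R : ℝ) (hx : 0 ≤ x) (hK : 0 ≤ K)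
    (h1 : R ≤ K) (h2 : 1 ≤ x → R ≤ K / Real.sqrt x) :
    R ≤ Real.sqrt 2 * K * (1+x) ^ (-(1/2) : ℝ) := by
  have h1x : (0:ℝ) < 1 + x := by linarith
  have hrw : (1+x : ℝ) ^ (-(1/2) : ℝ) = (Real.sqrt (1+x))⁻¹ := by
    rw [Real.rpow_neg h1x.le, Real.sqrt_eq_rpow]
  rw [hrw]
  have hs : 0 < Real.sqrt (1+x) := Real.sqrt_pos.mpr h1x
  rw [← div_eq_mul_inv, le_div_iff₀ hs]
  rcases le_or_gt x 1 with hx1 | hx1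
  · have hle : Real.sqrt (1+x) ≤ Real.sqrt 2 := Real.sqrt_le_sqrt (by linarith)
    calc R * Real.sqrt (1+x) ≤ K * Real.sqrt 2 :=
          mul_le_mul h1 hle (Real.sqrt_nonneg _) hK
      _ = Real.sqrt 2 * K := mul_comm _ _
  · have hsx : 0 < Real.sqrt x := Real.sqrt_pos.mpr (by linarith)
    have hle : Real.sqrt (1+x) ≤ Real.sqrt 2 * Real.sqrt x := by
      rw [← Real.sqrt_mul (by norm_num : (0:ℝ) ≤ 2) x]
      exact Real.sqrt_le_sqrt (by linarith)
    have hR : R ≤ K / Real.sqrt x := h2 hx1.le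
    have hR0 : R ≤ K := h1
    calc R * Real.sqrt (1+x) ≤ (K / Real.sqrt x) * (Real.sqrt 2 * Real.sqrt x) :=
          mul_le_mul hR hle (Real.sqrt_nonneg _) (div_nonneg hK hsx.le)
      _ = Real.sqrt 2 * K := by field_simp


/-- Lemma 2.1 of the paper. Oscillatory integral estimate:
for a fixed cutoff `φ` and a constant `C₀` bounding `Φ(2^N s; z)` and its `s`-derivative
uniformly on the support of `φ₀`, there is a constant `C` (depending only on `C₀` and `φ`)
such that the oscillatory integral is bounded by `C (1 + |t| 2^{4N})^{-1/2}`. -/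
theorem stmt0
    (φ : ℝ → ℝ)
    (hφ_smooth : ContDiff ℝ (⊤ : ℕ∞) φ)
    (hφ_supp : HasCompactSupport φ)
    (hφ_even : ∀ s : ℝ, φ (-s) = φ s)
    (hφ_one : ∀ s : ℝ, |s| ≤ 1 / 2 → φ s = 1)
    (hφ_zero : ∀ s : ℝ, 1 ≤ |s| → φ s = 0)
    (C₀ : ℝ) (hC₀ : 0 < C₀) :
    ∃ C : ℝ, 0 < C ∧
      ∀ m : ℕ, 1 ≤ m →
      ∀ Ψ : (Fin m → ℝ) → ℝ, (∀ z, 0 ≤ Ψ z) →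
      ∀ Φ : ℝ → (Fin m → ℝ) → ℂ,
        (∀ z, ContDiff ℝ 1 fun s => Φ s z) →
        (∀ (N : ℤ) (z : Fin m → ℝ), ∀ s ∈ Icc (1/4 : ℝ) 1,
            ‖Φ ((2:ℝ) ^ N * s) z‖ ≤ C₀ ∧
            ‖deriv (fun s' : ℝ => Φ ((2:ℝ) ^ N * s') z) s‖ ≤ C₀) →
      ∀ σ : ℝ, σ = 1 ∨ σ = -1 →
      ∀ (t : ℝ) (N : ℤ) (z : Fin m → ℝ),
        ‖∫ s in Ioi (0:ℝ),
            Complex.exp (-(Complex.I * (t : ℂ) * (((2:ℝ) ^ (4 * N) : ℝ) : ℂ) * (s : ℂ) ^ 4)) *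
              ((φ s - φ (2 * s) : ℝ) : ℂ) *
              Complex.exp ((σ : ℂ) * Complex.I * (((2:ℝ) ^ N : ℝ) : ℂ) * (s : ℂ) * ((Ψ z : ℝ) : ℂ)) *
              Φ ((2:ℝ) ^ N * s) z‖ ≤
          C * (1 + |t| * (2:ℝ) ^ (4 * N)) ^ (-(1/2) : ℝ) := by
  obtain ⟨Cφ, hCφ⟩ := hφ_supp.exists_bound_of_continuous hφ_smooth.continuous
  obtain ⟨Cφ', hCφ'⟩ := (hφ_supp.deriv).exists_bound_of_continuous
    (hφ_smooth.continuous_deriv (by simp))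
  set Mφ : ℝ := max 1 (max Cφ Cφ') with hMφ_def
  have hMφ1 : (1:ℝ) ≤ Mφ := le_max_left _ _
  have hMφ0 : (0:ℝ) < Mφ := by linarith
  have hφbd : ∀ x, |φ x| ≤ Mφ := fun x =>
    le_trans (Real.norm_eq_abs (φ x) ▸ hCφ x)
      (le_trans (le_max_left _ _) (le_max_right _ _))
  have hφ'bd : ∀ x, |deriv φ x| ≤ Mφ := fun x =>
    le_trans (Real.norm_eq_abs _ ▸ hCφ' x)
      (le_trans (le_max_right _ _) (le_max_right _ _))
  refine ⟨Real.sqrt 2 * (32 * Mφ * C₀), by positivity, ?_⟩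
  intro m hm Ψ hΨ Φ hΦ hΦbd σ hσ t N z
  set A : ℝ := t * (2:ℝ)^(4*N) with hA_def
  set B : ℝ := σ * (2:ℝ)^N * Ψ z with hB_def
  set Φc : ℝ → ℂ := fun s => Φ ((2:ℝ)^N * s) z with hΦc_def
  set g : ℝ → ℂ := fun s => ((φ s - φ (2*s) : ℝ) : ℂ) * Φc s with hg_def
  have hrw : ∀ s : ℝ,
      Complex.exp (-(Complex.I * (t : ℂ) * (((2:ℝ) ^ (4 * N) : ℝ) : ℂ) * (s : ℂ) ^ 4)) *
        ((φ s - φ (2 * s) : ℝ) : ℂ) *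
        Complex.exp ((σ : ℂ) * Complex.I * (((2:ℝ) ^ N : ℝ) : ℂ) * (s : ℂ) * ((Ψ z : ℝ) : ℂ)) *
        Φ ((2:ℝ) ^ N * s) z
      = phs A B s * g s := by
    intro s
    have he : Complex.exp (-(Complex.I * (t : ℂ) * (((2:ℝ) ^ (4 * N) : ℝ) : ℂ) * (s : ℂ) ^ 4)) *
        Complex.exp ((σ : ℂ) * Complex.I * (((2:ℝ) ^ N : ℝ) : ℂ) * (s : ℂ) * ((Ψ z : ℝ) : ℂ))
        = phs A B s := by
      unfold phs
      rw [← Complex.exp_add]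
      congr 1
      rw [hA_def, hB_def]
      push_cast
      ring
    rw [hg_def, hΦc_def, ← he]
    ring
  have hΦc_cd : ContDiff ℝ 1 Φc := (hΦ z).comp (contDiff_const.mul contDiff_id)
  have hφ₀cd : ContDiff ℝ (⊤ : ℕ∞) (fun s : ℝ => φ s - φ (2*s)) :=
    hφ_smooth.sub (hφ_smooth.comp (contDiff_const.mul contDiff_id))
  have hgcd : ContDiff ℝ 1 g :=
    (Complex.ofRealCLM.contDiff.comp (hφ₀cd.of_le (by simp))).mul hΦc_cd
  have hφ₀bd : ∀ s : ℝ, |φ s - φ (2*s)| ≤ 2*Mφ := by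
    intro s
    calc |φ s - φ (2*s)| ≤ |φ s| + |φ (2*s)| := abs_sub _ _
      _ ≤ 2*Mφ := by have := hφbd s; have := hφbd (2*s); linarith
  have hMg : ∀ s ∈ Icc (1/4:ℝ) 1, ‖g s‖ ≤ 2*Mφ*C₀ := by
    intro s hs
    rw [hg_def]
    have h1 : ‖((φ s - φ (2*s) : ℝ) : ℂ)‖ = |φ s - φ (2*s)| := by
      rw [Complex.norm_real, Real.norm_eq_abs]
    calc ‖((φ s - φ (2*s) : ℝ) : ℂ) * Φc s‖
        = |φ s - φ (2*s)| * ‖Φc s‖ := by rw [norm_mul, h1]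
      _ ≤ (2*Mφ) * C₀ :=
          mul_le_mul (hφ₀bd s) (hΦbd N z s hs).1 (norm_nonneg _) (by positivity)
      _ = 2*Mφ*C₀ := by ring
  have hφ₀d : ∀ s : ℝ, HasDerivAt (fun s : ℝ => φ s - φ (2*s))
      (deriv φ s - deriv φ (2*s) * 2) s := by
    intro s
    have h1 : HasDerivAt φ (deriv φ s) s := (hφ_smooth.differentiable (by simp) s).hasDerivAt
    have h3 : HasDerivAt (fun s : ℝ => 2*s) 2 s := by
      simpa using (hasDerivAt_id s).const_mul (2:ℝ)
    have h2 : HasDerivAt (fun s : ℝ => φ (2*s)) (deriv φ (2*s) * 2) s :=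
      (hφ_smooth.differentiable (by simp) (2*s)).hasDerivAt.comp s h3
    exact h1.sub h2
  have hgderiv : ∀ s : ℝ, HasDerivAt g
      (((deriv φ s - deriv φ (2*s) * 2 : ℝ) : ℂ) * Φc s
        + ((φ s - φ (2*s) : ℝ) : ℂ) * deriv Φc s) s := by
    intro s
    have h1 : HasDerivAt (fun s : ℝ => ((φ s - φ (2*s) : ℝ) : ℂ))
        ((deriv φ s - deriv φ (2*s) * 2 : ℝ) : ℂ) s := (hφ₀d s).ofReal_comp
    have h2 : HasDerivAt Φc (deriv Φc s) s := (hΦc_cd.differentiable one_ne_zero s).hasDerivAt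
    exact h1.mul h2
  have hMg' : ∀ s ∈ Icc (1/4:ℝ) 1, ‖deriv g s‖ ≤ 5*Mφ*C₀ := by
    intro s hs
    rw [(hgderiv s).deriv]
    have e1 : ‖((deriv φ s - deriv φ (2*s) * 2 : ℝ) : ℂ)‖ ≤ 3*Mφ := by
      rw [Complex.norm_real, Real.norm_eq_abs]
      have h4 := hφ'bd s
      have h5 := hφ'bd (2*s)
      calc |deriv φ s - deriv φ (2*s) * 2| ≤ |deriv φ s| + |deriv φ (2*s) * 2| := abs_sub _ _
        _ = |deriv φ s| + |deriv φ (2*s)| * 2 := by rw [abs_mul]; norm_num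
        _ ≤ 3*Mφ := by linarith
    have e2 : ‖((φ s - φ (2*s) : ℝ) : ℂ)‖ ≤ 2*Mφ := by
      rw [Complex.norm_real, Real.norm_eq_abs]; exact hφ₀bd s
    have e3 : ‖Φc s‖ ≤ C₀ := (hΦbd N z s hs).1
    have e4 : ‖deriv Φc s‖ ≤ C₀ := (hΦbd N z s hs).2
    calc ‖((deriv φ s - deriv φ (2*s) * 2 : ℝ) : ℂ) * Φc s
          + ((φ s - φ (2*s) : ℝ) : ℂ) * deriv Φc s‖
        ≤ ‖((deriv φ s - deriv φ (2*s) * 2 : ℝ) : ℂ)‖ * ‖Φc s‖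
          + ‖((φ s - φ (2*s) : ℝ) : ℂ)‖ * ‖deriv Φc s‖ := by
          refine le_trans (norm_add_le _ _) ?_
          rw [norm_mul, norm_mul]
      _ ≤ (3*Mφ) * C₀ + (2*Mφ) * C₀ := by
          exact add_le_add (mul_le_mul e1 e3 (norm_nonneg _) (by positivity))
            (mul_le_mul e2 e4 (norm_nonneg _) (by positivity))
      _ = 5*Mφ*C₀ := by ring
  -- reduce the integral to [1/4, 1]
  have hzero : ∀ s ∈ Ioi (0:ℝ) \ Ioc (1/4:ℝ) 1, phs A B s * g s = 0 := by
    intro s hs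
    rcases hs with ⟨hs1, hs2⟩
    rw [mem_Ioi] at hs1
    have hφ0 : φ s - φ (2*s) = 0 := by
      rcases lt_or_ge (1/4:ℝ) s with hgt | hle
      · have hns : ¬ (s ≤ 1) := fun hle1 => hs2 ⟨hgt, hle1⟩
        push_neg at hns
        rw [hφ_zero s (by rw [abs_of_pos hs1]; linarith),
          hφ_zero (2*s) (by rw [abs_of_pos (by linarith)]; linarith)]
        ring
      · rw [hφ_one s (by rw [abs_of_pos hs1]; linarith),
          hφ_one (2*s) (by rw [abs_of_pos (by linarith)]; linarith)]
        ring
    rw [hg_def]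
    show phs A B s * (((φ s - φ (2*s) : ℝ) : ℂ) * Φc s) = 0
    rw [hφ0]
    simp
  have hIoi : ∫ s in Ioi (0:ℝ), phs A B s * g s = ∫ s in (1/4:ℝ)..1, phs A B s * g s := by
    rw [intervalIntegral.integral_of_le (by norm_num : (1/4:ℝ) ≤ 1)]
    exact setIntegral_eq_of_subset_of_forall_diff_eq_zero measurableSet_Ioi
      (fun x hx => lt_trans (by norm_num) hx.1) hzero
  simp only [hrw]
  rw [hIoi]
  have hxA : |A| = |t| * (2:ℝ)^(4*N) := by
    rw [hA_def, abs_mul, abs_of_pos (by positivity : (0:ℝ) < (2:ℝ)^(4*N))]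
  rw [← hxA]
  apply combine |A| (32*Mφ*C₀) _ (abs_nonneg A) (by positivity)
  · refine (trivbd A B g (2*Mφ*C₀) hMg).trans ?_
    nlinarith
  · intro hA1
    refine (core2 A B hA1 g hgcd (2*Mφ*C₀) (5*Mφ*C₀) hMg hMg').trans ?_
    rw [show 11*(2*Mφ*C₀) + 2*(5*Mφ*C₀) = 32*Mφ*C₀ by ring]
end

section
/- There exists a constant C > 0 such that for every Schwartz function f on ℝ and every t ≠ 0, the free fourth-order Schrödinger evolution (e^{−itΔ²}f)(x) := (2π)^{−1} ∫_ℝ e^{i x ξ} e^{−i t ξ⁴} \hat f(ξ) dξ satisfies ‖e^{−itΔ²}f‖_{L^∞(ℝ)} ≤ C |t|^{−1/4} ‖f‖_{L¹(ℝ)}. -/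
/-!
Writing out `\hat f`, the propagator is `∫ K(x - y) f(y) dy` with kernel
`K(a) = ∫ e^{i(aξ - tξ⁴)} dξ`, so it suffices to bound the kernel by `C |t|^{-1/4}` uniformly in
`a`. Conjugation reduces to `t > 0` and the substitution `ξ = t^{-1/4} η` to the phase
`bη - η⁴`, for which the bound must be uniform in `b`. On `[0, ∞)` the derivative `b - 4η³` is
decreasing and has modulus at least one outside an interval of length at most one; on the good
pieces van der Corput's lemma (integration by parts against `1 / (iφ')`) applies, and the short
interval is estimated trivially. The kernel integral converges only conditionally, so Fubini is
applied on truncated frequency intervals `[-R, R]`; the truncation is removed using the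
integrability of `\hat f`.
-/

open MeasureTheory Set Filter Complex intervalIntegral
open scoped ComplexConjugate

section VanDerCorput

variable {φ φ' φ'' : ℝ → ℝ} {a b : ℝ}

theorem integral_cexp_I_mul_eq_of_deriv_ne_zero
    (hφ : ∀ x ∈ uIcc a b, HasDerivAt φ (φ' x) x)
    (hφ' : ∀ x ∈ uIcc a b, HasDerivAt φ' (φ'' x) x)
    (hφ'' : ContinuousOn φ'' (uIcc a b)) (hne : ∀ x ∈ uIcc a b, φ' x ≠ 0) :
    ∫ x in a..b, cexp (I * φ x) =
      cexp (I * φ b) / (I * φ' b) - cexp (I * φ a) / (I * φ' a) -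
        I * ∫ x in a..b, ((φ'' x / φ' x ^ 2 : ℝ) : ℂ) * cexp (I * φ x) := by
  have hIne : ∀ x ∈ uIcc a b, I * (φ' x : ℂ) ≠ 0 := fun x hx =>
    mul_ne_zero I_ne_zero (ofReal_ne_zero.2 (hne x hx))
  have hu : ∀ x ∈ uIcc a b, HasDerivAt (fun x => (I * (φ' x : ℂ))⁻¹)
      (I * ((φ'' x / φ' x ^ 2 : ℝ) : ℂ)) x := by
    intro x hx
    refine (((hφ' x hx).ofReal_comp.const_mul I).inv (hIne x hx)).congr_deriv ?_
    have := hne x hx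
    push_cast
    field_simp
    rw [I_sq]
    ring
  have hv : ∀ x ∈ uIcc a b, HasDerivAt (fun x => cexp (I * φ x))
      (cexp (I * φ x) * (I * φ' x)) x := fun x hx =>
    ((hφ x hx).ofReal_comp.const_mul I).cexp
  have hφ'c : ContinuousOn φ' (uIcc a b) := fun x hx =>
    (hφ' x hx).continuousAt.continuousWithinAt
  have hφc : ContinuousOn φ (uIcc a b) := fun x hx =>
    (hφ x hx).continuousAt.continuousWithinAt
  have ibp := integral_mul_deriv_eq_deriv_mul hu hv
    (ContinuousOn.intervalIntegrable (by
      refine continuousOn_const.mul (continuous_ofReal.comp_continuousOn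
        (hφ''.div (hφ'c.pow 2) fun x hx => pow_ne_zero 2 (hne x hx)))))
    (ContinuousOn.intervalIntegrable (by fun_prop))
  calc ∫ x in a..b, cexp (I * φ x)
      = ∫ x in a..b, (I * (φ' x : ℂ))⁻¹ * (cexp (I * φ x) * (I * φ' x)) :=
        integral_congr fun x hx => by
          field_simp [hIne x hx, ofReal_ne_zero.2 (hne x hx)]
    _ = _ := by
        simp only [ibp, mul_assoc, intervalIntegral.integral_const_mul, div_eq_inv_mul]

theorem norm_integral_cexp_I_mul_le_of_le_abs_deriv (hab : a ≤ b) {l : ℝ} (hl : 0 < l)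
    (hφ : ∀ x ∈ Icc a b, HasDerivAt φ (φ' x) x)
    (hφ' : ∀ x ∈ Icc a b, HasDerivAt φ' (φ'' x) x)
    (hφ'' : ContinuousOn φ'' (Icc a b)) (hφ''_nonpos : ∀ x ∈ Icc a b, φ'' x ≤ 0)
    (hl_le : ∀ x ∈ Ioo a b, l ≤ |φ' x|) :
    ‖∫ x in a..b, cexp (I * φ x)‖ ≤ 4 / l := by
  rcases hab.eq_or_lt with rfl | hlt
  · simp only [integral_same, norm_zero]
    positivity
  have hφ'c : ContinuousOn φ' (Icc a b) := fun x hx =>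
    (hφ' x hx).continuousAt.continuousWithinAt
  have hl_le' : ∀ x ∈ Icc a b, l ≤ |φ' x| := by
    rw [← closure_Ioo hlt.ne]
    exact le_on_closure hl_le continuousOn_const (by rw [closure_Ioo hlt.ne]; exact hφ'c.abs)
  have hne : ∀ x ∈ Icc a b, φ' x ≠ 0 := fun x hx h0 => by
    have := hl_le' x hx
    rw [h0, abs_zero] at this
    linarith
  have hinv : ∀ x ∈ Icc a b, ‖(φ' x)⁻¹‖ ≤ 1 / l := fun x hx => by
    rw [norm_inv, Real.norm_eq_abs, ← one_div]
    exact one_div_le_one_div_of_le hl (hl_le' x hx)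
  have hboundary : ∀ x ∈ Icc a b, ‖cexp (I * φ x) / (I * φ' x)‖ ≤ 1 / l := fun x hx => by
    rw [norm_div, norm_exp_I_mul_ofReal, norm_mul, norm_I, one_mul, norm_real, one_div,
      ← norm_inv]
    exact hinv x hx
  have htail : ‖∫ x in a..b, ((φ'' x / φ' x ^ 2 : ℝ) : ℂ) * cexp (I * φ x)‖ ≤ 2 / l := by
    have hint : IntervalIntegrable (fun x => -(φ'' x / φ' x ^ 2)) volume a b := by
      refine ContinuousOn.intervalIntegrable ?_
      rw [uIcc_of_le hab]
      exact (hφ''.div (hφ'c.pow 2) fun x hx => pow_ne_zero 2 (hne x hx)).neg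
    calc _ ≤ ∫ x in a..b, -(φ'' x / φ' x ^ 2) := by
          refine norm_integral_le_of_norm_le hab (ae_of_all _ fun x hx => ?_) hint
          rw [norm_mul, norm_exp_I_mul_ofReal, mul_one, norm_real, Real.norm_eq_abs,
            abs_of_nonpos (div_nonpos_of_nonpos_of_nonneg (hφ''_nonpos x (Ioc_subset_Icc_self hx))
              (sq_nonneg _))]
      _ = (φ' b)⁻¹ - (φ' a)⁻¹ := by
          refine integral_eq_sub_of_hasDerivAt (f := fun x => (φ' x)⁻¹) (fun x hx => ?_) hint
          rw [uIcc_of_le hab] at hx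
          exact ((hφ' x hx).inv (hne x hx)).congr_deriv (by ring)
      _ ≤ ‖(φ' b)⁻¹‖ + ‖(φ' a)⁻¹‖ := by
          simp only [Real.norm_eq_abs]
          linarith [le_abs_self (φ' b)⁻¹, neg_abs_le (φ' a)⁻¹]
      _ ≤ 1 / l + 1 / l := by
          linarith [hinv a (left_mem_Icc.2 hab), hinv b (right_mem_Icc.2 hab)]
      _ = 2 / l := by ring
  rw [integral_cexp_I_mul_eq_of_deriv_ne_zero (by rwa [uIcc_of_le hab]) (by rwa [uIcc_of_le hab])
    (by rwa [uIcc_of_le hab]) (by rwa [uIcc_of_le hab])]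
  calc _ ≤ ‖cexp (I * φ b) / (I * φ' b)‖ + ‖cexp (I * φ a) / (I * φ' a)‖ +
        ‖∫ x in a..b, ((φ'' x / φ' x ^ 2 : ℝ) : ℂ) * cexp (I * φ x)‖ := by
        refine (norm_sub_le _ _).trans (add_le_add (norm_sub_le _ _) ?_)
        rw [norm_mul, norm_I, one_mul]
    _ ≤ 1 / l + 1 / l + 2 / l := add_le_add (add_le_add (hboundary b (right_mem_Icc.2 hab))
        (hboundary a (left_mem_Icc.2 hab))) htail
    _ = 4 / l := by ring

end VanDerCorput

theorem norm_integral_cexp_I_mul_neg (φ : ℝ → ℝ) (a b : ℝ) :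
    ‖∫ x in a..b, cexp (I * ↑(-φ x))‖ = ‖∫ x in a..b, cexp (I * ↑(φ x))‖ := by
  rw [← norm_conj, ← intervalIntegral_conj]
  congr 1
  refine integral_congr fun x _ => ?_
  rw [← exp_conj, map_mul, conj_I, conj_ofReal, ofReal_neg, neg_mul, mul_neg, neg_neg]

theorem norm_integral_le_of_split {E : Type*} [NormedAddCommGroup E] [NormedSpace ℝ E]
    {f : ℝ → E} {a c d b C : ℝ} (hf : IntervalIntegrable f volume a b)
    (hac : a ≤ c) (hcd : c ≤ d) (hdb : d ≤ b) (hC : ∀ x ∈ Ioc c d, ‖f x‖ ≤ C) :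
    ‖∫ x in a..b, f x‖ ≤ ‖∫ x in a..c, f x‖ + C * (d - c) + ‖∫ x in d..b, f x‖ := by
  have hab : a ≤ b := hac.trans (hcd.trans hdb)
  have hint : ∀ {p q}, p ∈ Icc a b → q ∈ Icc a b → IntervalIntegrable f volume p q :=
    fun hp hq => hf.mono_set (uIcc_subset_uIcc (by rwa [uIcc_of_le hab]) (by rwa [uIcc_of_le hab]))
  have hc : c ∈ Icc a b := ⟨hac, hcd.trans hdb⟩
  have hd : d ∈ Icc a b := ⟨hac.trans hcd, hdb⟩
  have hmid : ‖∫ x in c..d, f x‖ ≤ C * (d - c) := by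
    rw [← abs_of_nonneg (sub_nonneg.2 hcd)]
    exact norm_integral_le_of_norm_le_const (by rwa [uIoc_of_le hcd])
  have hb : b ∈ Icc a b := right_mem_Icc.2 hab
  rw [← integral_add_adjacent_intervals (hint (left_mem_Icc.2 hab) hc) (hint hc hb),
    ← integral_add_adjacent_intervals (hint hc hd) (hint hd hb), ← add_assoc]
  exact (norm_add₃_le).trans (by gcongr)

theorem norm_integral_cexp_quartic_le_of_one_le_abs_deriv {b A B : ℝ} (hAB : A ≤ B)
    (h : ∀ η ∈ Ioo A B, 1 ≤ |b - 4 * η ^ 3|) :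
    ‖∫ η in A..B, cexp (I * ↑(b * η - η ^ 4))‖ ≤ 4 := by
  have hφ : ∀ η : ℝ, HasDerivAt (fun η => b * η - η ^ 4) (b - 4 * η ^ 3) η := fun η =>
    (((hasDerivAt_id η).const_mul b).sub (hasDerivAt_pow 4 η)).congr_deriv (by norm_num)
  have hφ' : ∀ η : ℝ, HasDerivAt (fun η => b - 4 * η ^ 3) (-(12 * η ^ 2)) η := fun η =>
    (((hasDerivAt_pow 3 η).const_mul 4).const_sub b).congr_deriv (by norm_num; ring)
  simpa using norm_integral_cexp_I_mul_le_of_le_abs_deriv hAB one_pos (fun η _ => hφ η)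
    (fun η _ => hφ' η) (by fun_prop) (fun η _ => by nlinarith [sq_nonneg η]) h

theorem exists_nonneg_pow_eq {y : ℝ} (hy : 0 ≤ y) {n : ℕ} (hn : n ≠ 0) :
    ∃ c : ℝ, 0 ≤ c ∧ c ^ n = y :=
  ⟨y ^ (n⁻¹ : ℝ), by positivity, Real.rpow_inv_natCast_pow hy hn⟩

theorem norm_integral_cexp_quartic_zero_le (b : ℝ) {R : ℝ} (hR : 0 ≤ R) :
    ‖∫ η in 0..R, cexp (I * ↑(b * η - η ^ 4))‖ ≤ 9 := by
  -- `4c³ = (b - 1)⁺` and `4d³ = (b + 1)⁺` cut out the only place where `|b - 4η³| < 1`.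
  obtain ⟨c, hc0, hc⟩ := exists_nonneg_pow_eq (y := max 0 (b - 1) / 4) (by positivity) three_ne_zero
  obtain ⟨d, hd0, hd⟩ := exists_nonneg_pow_eq (y := max 0 (b + 1) / 4) (by positivity) three_ne_zero
  have hcd : c ≤ d := (pow_le_pow_iff_left₀ hc0 hd0 three_ne_zero).1 <| by
    rw [hc, hd]
    gcongr
    linarith
  have hdc : d ≤ c + 1 := (pow_le_pow_iff_left₀ hd0 (by linarith) three_ne_zero).1 <| by
    have : max 0 (b + 1) ≤ max 0 (b - 1) + 2 :=
      max_le (by linarith [le_max_left 0 (b - 1)]) (by linarith [le_max_right 0 (b - 1)])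
    nlinarith [sq_nonneg c]
  have hlow : ∀ η ∈ Ioo 0 (min c R), 1 ≤ |b - 4 * η ^ 3| := fun η hη => by
    have hηc : η < c := (lt_min_iff.1 hη.2).1
    have h0 : 0 ≤ η := hη.1.le
    have : η ^ 3 < c ^ 3 := by gcongr
    rcases lt_max_iff.1 (by linarith : 4 * η ^ 3 < max 0 (b - 1)) with h | h
    · nlinarith [pow_pos hη.1 3]
    · exact le_abs.2 (Or.inl (by linarith))
  have hhigh : ∀ η ∈ Ioo (min d R) R, 1 ≤ |b - 4 * η ^ 3| := fun η hη => by
    have hdη : d < η := (min_lt_iff.1 hη.1).resolve_right hη.2.not_gt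
    have : d ^ 3 < η ^ 3 := by gcongr
    exact le_abs.2 (Or.inr (by linarith [le_max_right 0 (b + 1)]))
  have hlen : min d R - min c R ≤ 1 := by
    simp only [min_def]; split_ifs <;> linarith
  calc _ ≤ 4 + 1 * (min d R - min c R) + 4 :=
        (norm_integral_le_of_split (Continuous.intervalIntegrable (by fun_prop) _ _)
          (le_min hc0 hR) (min_le_min_right R hcd) (min_le_right d R)
          fun η _ => (norm_exp_I_mul_ofReal _).le).trans <|
        add_le_add (add_le_add
          (norm_integral_cexp_quartic_le_of_one_le_abs_deriv (le_min hc0 hR) hlow) le_rfl)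
          (norm_integral_cexp_quartic_le_of_one_le_abs_deriv (min_le_right d R) hhigh)
    _ ≤ 9 := by linarith

theorem norm_integral_cexp_quartic_le (b : ℝ) {R : ℝ} (hR : 0 ≤ R) :
    ‖∫ η in -R..R, cexp (I * ↑(b * η - η ^ 4))‖ ≤ 18 := by
  have hcont : Continuous fun η : ℝ => cexp (I * ↑(b * η - η ^ 4)) := by fun_prop
  have hreflect : ∫ η in -R..0, cexp (I * ↑(b * η - η ^ 4)) =
      ∫ η in 0..R, cexp (I * ↑(-b * η - η ^ 4)) := by
    have := integral_comp_neg (a := 0) (b := R) fun η => cexp (I * ↑(b * η - η ^ 4))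
    rw [neg_zero] at this
    rw [← this]
    refine integral_congr fun η _ => ?_
    simp only [neg_mul, mul_neg, Even.neg_pow (by decide : Even 4)]
  rw [← integral_add_adjacent_intervals (hcont.intervalIntegrable (-R) 0)
    (hcont.intervalIntegrable 0 R), hreflect]
  linarith [norm_add_le (∫ η in 0..R, cexp (I * ↑(-b * η - η ^ 4)))
    (∫ η in 0..R, cexp (I * ↑(b * η - η ^ 4))),
    norm_integral_cexp_quartic_zero_le (-b) hR, norm_integral_cexp_quartic_zero_le b hR]

theorem norm_integral_cexp_quartic_kernel_le_of_pos (a : ℝ) {t R : ℝ} (ht : 0 < t)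
    (hR : 0 ≤ R) :
    ‖∫ ξ in -R..R, cexp (I * ↑(a * ξ - t * ξ ^ 4))‖ ≤ 18 * t ^ (-(1 / 4) : ℝ) := by
  set s := t ^ (-(1 / 4) : ℝ) with hs_def
  have hs : 0 < s := Real.rpow_pos_of_pos ht _
  have hts : t * s ^ 4 = 1 := by
    rw [hs_def, ← Real.rpow_natCast, ← Real.rpow_mul ht.le]
    norm_num [Real.rpow_neg_one, ht.ne']
  have hscale : ∫ ξ in -R..R, cexp (I * ↑(a * ξ - t * ξ ^ 4)) =
      s • ∫ η in -(R / s)..R / s, cexp (I * ↑(a * s * η - η ^ 4)) := by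
    calc _ = ∫ ξ in s * -(R / s)..s * (R / s), cexp (I * ↑(a * ξ - t * ξ ^ 4)) := by
          rw [mul_neg, mul_div_cancel₀ _ hs.ne']
      _ = s • ∫ η in -(R / s)..R / s, cexp (I * ↑(a * (s * η) - t * (s * η) ^ 4)) :=
          (smul_integral_comp_mul_left _ s).symm
      _ = _ := by
          congr 1
          refine integral_congr fun η _ => ?_
          rw [show a * (s * η) - t * (s * η) ^ 4 = a * s * η - t * s ^ 4 * η ^ 4 by ring, hts,
            one_mul]
  rw [hscale, norm_smul, Real.norm_eq_abs, abs_of_pos hs, mul_comm]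
  gcongr
  exact norm_integral_cexp_quartic_le (a * s) (div_nonneg hR hs.le)

theorem norm_integral_cexp_quartic_kernel_le (a : ℝ) {t R : ℝ} (ht : t ≠ 0) (hR : 0 ≤ R) :
    ‖∫ ξ in -R..R, cexp (I * ↑(a * ξ - t * ξ ^ 4))‖ ≤ 18 * |t| ^ (-(1 / 4) : ℝ) := by
  rcases ht.lt_or_gt with ht | ht
  · calc _ = ‖∫ ξ in -R..R, cexp (I * ↑(-(-a * ξ - -t * ξ ^ 4)))‖ := by
          simp_rw [show ∀ ξ : ℝ, -(-a * ξ - -t * ξ ^ 4) = a * ξ - t * ξ ^ 4 from fun ξ => by ring]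
      _ = ‖∫ ξ in -R..R, cexp (I * ↑(-a * ξ - -t * ξ ^ 4))‖ := norm_integral_cexp_I_mul_neg _ _ _
      _ ≤ 18 * |t| ^ (-(1 / 4) : ℝ) := by
          rw [abs_of_neg ht]
          exact norm_integral_cexp_quartic_kernel_le_of_pos (-a) (neg_pos.2 ht) hR
  · rw [abs_of_pos ht]
    exact norm_integral_cexp_quartic_kernel_le_of_pos a ht hR

theorem cexp_propagator_phase (x t ξ : ℝ) :
    cexp (I * (x : ℂ) * (ξ : ℂ)) * cexp (-(I * (t : ℂ) * (ξ : ℂ) ^ 4)) =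
      cexp (I * ↑(x * ξ - t * ξ ^ 4)) := by
  rw [← exp_add]
  push_cast
  ring_nf

theorem intervalIntegral_propagator_eq {f : ℝ → ℂ} (hf : Integrable f) (t x : ℝ) {R : ℝ}
    (hR : 0 ≤ R) :
    ∫ ξ in -R..R, cexp (I * (x : ℂ) * (ξ : ℂ)) * cexp (-(I * (t : ℂ) * (ξ : ℂ) ^ 4)) *
        ∫ y : ℝ, cexp (-(I * (y : ℂ) * (ξ : ℂ))) * f y =
      ∫ y : ℝ, (∫ ξ in -R..R, cexp (I * ↑((x - y) * ξ - t * ξ ^ 4))) * f y := by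
  have hK : Continuous fun p : ℝ × ℝ => cexp (I * ↑((x - p.2) * p.1 - t * p.1 ^ 4)) := by
    fun_prop
  have hint : Integrable
      (Function.uncurry fun ξ y : ℝ => cexp (I * ↑((x - y) * ξ - t * ξ ^ 4)) * f y)
      ((volume.restrict (Ioc (-R) R)).prod volume) := by
    refine ((integrable_const (1 : ℝ)).mul_prod hf.norm).mono'
      (hK.aestronglyMeasurable.mul hf.aestronglyMeasurable.comp_snd) (ae_of_all _ fun ⟨ξ, y⟩ => ?_)
    rw [Function.uncurry_apply_pair, norm_mul, norm_exp_I_mul_ofReal, one_mul]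
  simp only [integral_of_le (neg_le_self hR), ← MeasureTheory.integral_mul_const]
  rw [← integral_integral_swap hint]
  refine integral_congr_ae (ae_of_all _ fun ξ => ?_)
  simp only [← MeasureTheory.integral_const_mul]
  refine integral_congr_ae (ae_of_all _ fun y => ?_)
  dsimp only
  rw [cexp_propagator_phase, ← mul_assoc, ← exp_add]
  congr 2
  push_cast
  ring

theorem norm_integral_le_of_norm_intervalIntegral_le {E : Type*} [NormedAddCommGroup E]
    [NormedSpace ℝ E] {G : ℝ → E} (hG : Integrable G) {M : ℝ}
    (h : ∀ R, 0 ≤ R → ‖∫ ξ in -R..R, G ξ‖ ≤ M) : ‖∫ ξ, G ξ‖ ≤ M :=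
  le_of_tendsto (intervalIntegral_tendsto_integral hG tendsto_neg_atTop_atBot tendsto_id).norm
    ((eventually_ge_atTop 0).mono h)

theorem norm_integral_propagator_le {f : ℝ → ℂ} (hf : Integrable f)
    (hF : Integrable fun ξ : ℝ => ∫ y : ℝ, cexp (-(I * (y : ℂ) * (ξ : ℂ))) * f y) {t : ℝ}
    (ht : t ≠ 0) (x : ℝ) :
    ‖∫ ξ : ℝ, cexp (I * (x : ℂ) * (ξ : ℂ)) * cexp (-(I * (t : ℂ) * (ξ : ℂ) ^ 4)) *
        ∫ y : ℝ, cexp (-(I * (y : ℂ) * (ξ : ℂ))) * f y‖ ≤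
      18 * |t| ^ (-(1 / 4) : ℝ) * ∫ y : ℝ, ‖f y‖ := by
  have hphase : ∀ ξ : ℝ, ‖cexp (I * (x : ℂ) * (ξ : ℂ)) * cexp (-(I * (t : ℂ) * (ξ : ℂ) ^ 4))‖ ≤ 1 :=
    fun ξ => by rw [cexp_propagator_phase, norm_exp_I_mul_ofReal]
  refine norm_integral_le_of_norm_intervalIntegral_le
    (hF.bdd_mul (by fun_prop) (ae_of_all _ hphase)) fun R hR => ?_
  rw [intervalIntegral_propagator_eq hf t x hR, ← MeasureTheory.integral_const_mul]
  refine norm_integral_le_of_norm_le (hf.norm.const_mul _) (ae_of_all _ fun y => ?_)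
  rw [norm_mul]
  gcongr
  exact norm_integral_cexp_quartic_kernel_le (x - y) ht hR

open FourierTransform in
theorem SchwartzMap.integrable_integral_cexp_neg_mul (f : SchwartzMap ℝ ℂ) :
    Integrable fun ξ : ℝ => ∫ y : ℝ, cexp (-(I * (y : ℂ) * (ξ : ℂ))) * f y := by
  have h : (fun ξ : ℝ => ∫ y : ℝ, cexp (-(I * (y : ℂ) * (ξ : ℂ))) * f y) =
      fun ξ => 𝓕 (f : ℝ → ℂ) ((2 * Real.pi)⁻¹ * ξ) := by
    ext ξ
    rw [Real.fourier_real_eq_integral_exp_smul]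
    refine integral_congr_ae (ae_of_all _ fun y => ?_)
    dsimp only
    rw [smul_eq_mul]
    congr 2
    push_cast
    field_simp
  rw [h, ← SchwartzMap.fourier_coe]
  exact (𝓕 f).integrable.comp_mul_left' (by positivity)

/-- the `L¹ → L∞` dispersive estimate for the free fourth-order
Schrödinger evolution on `ℝ`:
`‖e^{-itΔ²} f‖_∞ ≤ C |t|^{-1/4} ‖f‖₁`, where
`(e^{-itΔ²}f)(x) = (2π)⁻¹ ∫ e^{ixξ} e^{-itξ⁴} \hat f(ξ) dξ` and
`\hat f(ξ) = ∫ e^{-ixξ} f(x) dx`. -/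
theorem stmt3 :
    ∃ C : ℝ, 0 < C ∧
      ∀ (f : SchwartzMap ℝ ℂ) (t : ℝ), t ≠ 0 → ∀ x : ℝ,
        ‖(((2 * Real.pi)⁻¹ : ℝ) : ℂ) *
            ∫ ξ : ℝ, Complex.exp (Complex.I * (x : ℂ) * (ξ : ℂ)) *
              Complex.exp (-(Complex.I * (t : ℂ) * (ξ : ℂ) ^ 4)) *
              (∫ y : ℝ, Complex.exp (-(Complex.I * (y : ℂ) * (ξ : ℂ))) * f y)‖ ≤
          C * |t| ^ (-(1/4) : ℝ) * ∫ y : ℝ, ‖f y‖ := by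
  refine ⟨9 / Real.pi, by positivity, fun f t ht x => ?_⟩
  have hdisp := norm_integral_propagator_le f.integrable f.integrable_integral_cexp_neg_mul ht x
  rw [norm_mul, norm_real, Real.norm_of_nonneg (by positivity)]
  calc _ ≤ (2 * Real.pi)⁻¹ * (18 * |t| ^ (-(1 / 4) : ℝ) * ∫ y : ℝ, ‖f y‖) := by gcongr
    _ = _ := by
      field_simp
      ring
end

section
/- Let μ > 0 and let F ∈ C²(ℝ, ℂ) with F′(0) = 0. Then for all x, y ∈ ℝ: F(μ|x−y|) = F(μ|x|) − μ y · sgn(x) F′(μ|x|) + μ² y² ∫₀¹ (1−θ) F″(μ|x−θy|) dθ. -/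
/-! The even function `g t = F |t|` is `C²` because `F′(0) = 0`: its derivative
`sgn t • F′ |t|` is the odd extension of `F′`, which is differentiable at `0` with derivative
`F″ 0`, and `g″ t = F″ |t|`. The claim is then Taylor's formula with integral remainder for `g`
at `μ x` with increment `-μ y`, using `μ |t| = |μ t|` and `sgn (μ x) = sgn x`. -/

open Set Filter Topology

namespace Real

lemma eventually_sign_eq_and_abs_eq {t : ℝ} (ht : t ≠ 0) :
    ∀ᶠ s in 𝓝 t, sign s = sign t ∧ |s| = sign t * s := by
  rcases ht.lt_or_gt with ht | ht
  · filter_upwards [Iio_mem_nhds ht] with s (hs : s < 0)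
    simp [sign_of_neg, abs_of_neg, hs, ht]
  · filter_upwards [Ioi_mem_nhds ht] with s (hs : 0 < s)
    simp [sign_of_pos, abs_of_pos, hs, ht]

lemma sign_mul_self_of_ne_zero {t : ℝ} (ht : t ≠ 0) : sign t * sign t = 1 := by
  rcases sign_apply_eq_of_ne_zero t ht with h | h <;> simp [h]

lemma sign_mul_of_pos {μ : ℝ} (hμ : 0 < μ) (x : ℝ) : sign (μ * x) = sign x := by
  rcases lt_trichotomy x 0 with h | rfl | h
  · rw [sign_of_neg h, sign_of_neg (mul_neg_of_pos_of_neg hμ h)]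
  · simp
  · rw [sign_of_pos h, sign_of_pos (mul_pos hμ h)]

end Real

section AbsComp

variable {E : Type*} [NormedAddCommGroup E] [NormedSpace ℝ E] {f : ℝ → E} {f' : E} {t : ℝ}

theorem HasDerivAt.comp_abs_of_ne_zero (hf : HasDerivAt f f' |t|) (ht : t ≠ 0) :
    HasDerivAt (fun s => f |s|) (Real.sign t • f') t := by
  have hev := Real.eventually_sign_eq_and_abs_eq ht
  have hlin : HasDerivAt (fun s => Real.sign t * s) (Real.sign t) t := by
    simpa using (hasDerivAt_id t).const_mul (Real.sign t)
  rw [hev.self_of_nhds.2] at hf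
  exact (hf.scomp t hlin).congr_of_eventuallyEq (hev.mono fun s hs => congrArg f hs.2)

theorem hasDerivAt_comp_abs_zero (hf : HasDerivAt f 0 0) :
    HasDerivAt (fun s => f |s|) 0 0 := by
  have hright : HasDerivWithinAt (fun s => f |s|) 0 (Ici 0) 0 :=
    hf.hasDerivWithinAt.congr_of_mem (fun s (hs : 0 ≤ s) => by rw [abs_of_nonneg hs])
      self_mem_Ici
  have hleft : HasDerivWithinAt (fun s => f |s|) 0 (Iic 0) 0 := by
    have hneg : HasDerivAt (fun s => f (-s)) 0 0 := by
      have hf : HasDerivAt f 0 (-0) := by rwa [neg_zero]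
      simpa [Function.comp_def] using hf.scomp 0 (hasDerivAt_neg 0)
    exact hneg.hasDerivWithinAt.congr_of_mem (fun s (hs : s ≤ 0) => by rw [abs_of_nonpos hs])
      self_mem_Iic
  simpa [Iic_union_Ici] using hleft.union hright

theorem HasDerivAt.comp_abs (hf : HasDerivAt f f' |t|) (h0 : t = 0 → f' = 0) :
    HasDerivAt (fun s => f |s|) (Real.sign t • f') t := by
  rcases eq_or_ne t 0 with rfl | ht
  · obtain rfl := h0 rfl
    simpa using hasDerivAt_comp_abs_zero (by simpa using hf)
  · exact hf.comp_abs_of_ne_zero ht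

theorem HasDerivAt.sign_smul_comp_abs_of_ne_zero (hf : HasDerivAt f f' |t|) (ht : t ≠ 0) :
    HasDerivAt (fun s => Real.sign s • f |s|) f' t := by
  have h := (hf.comp_abs_of_ne_zero ht).const_smul (Real.sign t)
  rw [smul_smul, Real.sign_mul_self_of_ne_zero ht, one_smul] at h
  exact h.congr_of_eventuallyEq
    ((Real.eventually_sign_eq_and_abs_eq ht).mono fun s hs => by simp [hs.1])

theorem hasDerivAt_sign_smul_comp_abs_zero (hf : HasDerivAt f f' 0) (h0 : f 0 = 0) :
    HasDerivAt (fun s => Real.sign s • f |s|) f' 0 := by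
  have hright : HasDerivWithinAt (fun s => Real.sign s • f |s|) f' (Ici 0) 0 := by
    refine hf.hasDerivWithinAt.congr_of_mem (fun s (hs : 0 ≤ s) => ?_) self_mem_Ici
    rcases hs.eq_or_lt with rfl | hs
    · simp [h0]
    · simp [Real.sign_of_pos hs, abs_of_pos hs]
  have hleft : HasDerivWithinAt (fun s => Real.sign s • f |s|) f' (Iic 0) 0 := by
    have hneg : HasDerivAt (fun s => -f (-s)) f' 0 := by
      have hf : HasDerivAt f f' (-0) := by rwa [neg_zero]
      simpa [Function.comp_def, Pi.neg_def] using (hf.scomp 0 (hasDerivAt_neg 0)).neg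
    refine hneg.hasDerivWithinAt.congr_of_mem (fun s (hs : s ≤ 0) => ?_) self_mem_Iic
    rcases hs.eq_or_lt with rfl | hs
    · simp [h0]
    · simp [Real.sign_of_neg hs, abs_of_neg hs]
  simpa [Iic_union_Ici] using hleft.union hright

theorem HasDerivAt.sign_smul_comp_abs (hf : HasDerivAt f f' |t|) (h0 : t = 0 → f 0 = 0) :
    HasDerivAt (fun s => Real.sign s • f |s|) f' t := by
  rcases eq_or_ne t 0 with rfl | ht
  · exact hasDerivAt_sign_smul_comp_abs_zero (by simpa using hf) (h0 rfl)
  · exact hf.sign_smul_comp_abs_of_ne_zero ht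

end AbsComp

section Taylor

variable {E : Type*} [NormedAddCommGroup E] [NormedSpace ℝ E] [CompleteSpace E]

theorem taylor_integral_remainder_two {g g' g'' : ℝ → E} (hg : ∀ t, HasDerivAt g (g' t) t)
    (hg' : ∀ t, HasDerivAt g' (g'' t) t) (hg'' : Continuous g'') (a h : ℝ) :
    g (a + h) = g a + h • g' a + h ^ 2 • ∫ θ in (0:ℝ)..1, (1 - θ) • g'' (a + θ * h) := by
  have hline (θ : ℝ) : HasDerivAt (fun θ => a + θ * h) h θ := by
    simpa using ((hasDerivAt_id θ).mul_const h).const_add a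
  have hψ (θ : ℝ) : HasDerivAt (fun θ => g (a + θ * h) + (1 - θ) • h • g' (a + θ * h))
      (h ^ 2 • ((1 - θ) • g'' (a + θ * h))) θ := by
    have h1 := (hg _).scomp θ (hline θ)
    have h2 := ((hasDerivAt_id θ).const_sub 1).smul (((hg' _).scomp θ (hline θ)).const_smul h)
    refine (h1.add h2).congr_deriv ?_
    simp only [id, Function.comp_apply, Pi.smul_apply, smul_smul]
    module
  have hcont : Continuous fun θ : ℝ => h ^ 2 • ((1 - θ) • g'' (a + θ * h)) := by fun_prop
  rw [← intervalIntegral.integral_smul,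
    intervalIntegral.integral_eq_sub_of_hasDerivAt (fun θ _ => hψ θ) (hcont.intervalIntegrable 0 1)]
  simp

theorem taylor_comp_abs {F : ℝ → E} (hF : ContDiff ℝ 2 F) (hF'0 : deriv F 0 = 0) (a h : ℝ) :
    F |a + h| = F |a| + (h * Real.sign a) • deriv F |a| +
      h ^ 2 • ∫ θ in (0:ℝ)..1, (1 - θ) • deriv (deriv F) |a + θ * h| := by
  obtain ⟨hF1, -, hF'⟩ := (contDiff_succ_iff_deriv (n := 1)).1 hF
  obtain ⟨hF2, hF''⟩ := contDiff_one_iff_deriv.1 hF'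
  have hg (t : ℝ) := (hF1 |t|).hasDerivAt.comp_abs fun ht => by simp [ht, hF'0]
  have hg' (t : ℝ) := (hF2 |t|).hasDerivAt.sign_smul_comp_abs fun _ => hF'0
  simpa [smul_smul] using
    taylor_integral_remainder_two hg hg' (hF''.comp continuous_abs) a h

end Taylor

/-- Lemma 2.4 (ii): second-order Taylor-type expansion of
`F(μ|x−y|)` around `μ|x|`, valid for `F ∈ C²(ℝ, ℂ)` with `F′(0) = 0`:
`F(μ|x−y|) = F(μ|x|) − μ y sgn(x) F′(μ|x|) + μ² y² ∫₀¹ (1−θ) F″(μ|x−θy|) dθ`. -/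
theorem stmt4
    (μ : ℝ) (hμ : 0 < μ)
    (F : ℝ → ℂ) (hF : ContDiff ℝ 2 F) (hF'0 : deriv F 0 = 0)
    (x y : ℝ) :
    F (μ * |x - y|) =
      F (μ * |x|) - ((μ * y * Real.sign x : ℝ) : ℂ) * deriv F (μ * |x|) +
        ((μ ^ 2 * y ^ 2 : ℝ) : ℂ) *
          ∫ θ in (0:ℝ)..1, ((1 - θ : ℝ) : ℂ) * deriv (deriv F) (μ * |x - θ * y|) := by
  have habs (t : ℝ) : μ * |t| = |μ * t| := by rw [abs_mul, abs_of_pos hμ]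
  have key := taylor_comp_abs hF hF'0 (μ * x) (-(μ * y))
  rw [Real.sign_mul_of_pos hμ, ← intervalIntegral.integral_smul] at key
  simp only [habs, ← intervalIntegral.integral_const_mul]
  convert key using 2
  · ring_nf
  · rw [Complex.real_smul]
    push_cast
    ring
  · refine intervalIntegral.integral_congr fun θ _ => ?_
    rw [show μ * x + θ * -(μ * y) = μ * (x - θ * y) by ring]
    simp only [Complex.real_smul]
    push_cast
    ring
end

section
/- Let v ∈ L²(ℝ) be nonnegative, not a.e. zero, with ∫_ℝ (1+|x|)⁴ v(x)² dx < ∞; let P be the orthogonal projection of L²(ℝ) onto span{v} and Q = I − P. Then for every f ∈ L²(ℝ) with ∫_ℝ v(x) f(x) dx = 0 one has ∫_ℝ ∫_ℝ \overline{v(x) f(x)} |x−y|² v(y) f(y) dy dx = −2 | ∫_ℝ x v(x) f(x) dx |². Consequently, for f ∈ QL²(ℝ), the function Q( v(·) ∫_ℝ |·−y|² v(y) f(y) dy ) vanishes in L²(ℝ) if and only if ∫_ℝ x v(x) f(x) dx = 0; that is, the kernel of Q v G₋₁ v Q on QL²(ℝ) is exactly S₀L²(ℝ) = {f ∈ L²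 : ∫ v f = ∫ x v f = 0}. -/
open MeasureTheory

/-!
Write `g = v f`. Expanding `|x - y|² = x² - 2xy + y²` and using `∫ g = 0`, the inner integral is
the affine function `x ↦ m₂ - 2 m₁ x` of `x`, where `mₖ = ∫ yᵏ g(y) dy`; the moments exist because
`(1 + |x|)² v ∈ L²`. Pairing with `g` once more, the term `m₂` is killed by `∫ g = 0` again and
`-2 m₁ x` leaves `-2 |m₁|²`. For the kernel statement, `v (m₂ - 2 m₁ x) = c v` a.e. forces
`m₁ = 0`, since otherwise `v` would vanish off the single point `x = (m₂ - c) / (2 m₁)`.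
-/

lemma integrable_ofReal_pow_mul_of_integrable_weight {g : ℝ → ℂ} {n k : ℕ}
    (hg : AEStronglyMeasurable g volume)
    (hw : Integrable (fun x : ℝ => (1 + |x|) ^ n * ‖g x‖)) (hk : k ≤ n) :
    Integrable (fun x : ℝ => (x : ℂ) ^ k * g x) := by
  refine hw.mono' ((Complex.continuous_ofReal.pow k).aestronglyMeasurable.mul hg)
    (Filter.Eventually.of_forall fun x => ?_)
  have hxk : |x| ^ k ≤ (1 + |x|) ^ n :=
    (pow_le_pow_left₀ (abs_nonneg x) (le_add_of_nonneg_left zero_le_one) k).trans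
      (pow_le_pow_right₀ (le_add_of_nonneg_right (abs_nonneg x)) hk)
  rw [norm_mul, norm_pow, Complex.norm_real, Real.norm_eq_abs]
  exact mul_le_mul_of_nonneg_right hxk (norm_nonneg _)

lemma integrable_weight_mul_norm_mul {v : ℝ → ℝ} {f : ℝ → ℂ} (hv : Measurable v)
    (hv_int : Integrable (fun x : ℝ => (1 + |x|) ^ 4 * (v x) ^ 2)) (hf : MemLp f 2 volume) :
    Integrable (fun x : ℝ => (1 + |x|) ^ 2 * ‖(v x : ℂ) * f x‖) := by
  have hw_meas : Measurable fun x : ℝ => (1 + |x|) ^ 2 * v x := by fun_prop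
  have hw : MemLp (fun x : ℝ => (1 + |x|) ^ 2 * v x) 2 volume := by
    rw [memLp_two_iff_integrable_sq hw_meas.aestronglyMeasurable]
    exact hv_int.congr (Filter.Eventually.of_forall fun x => by ring)
  convert (hw.norm.integrable_mul hf.norm).norm using 2 with x
  simp [norm_mul, mul_assoc]

lemma eq_zero_of_ae_mul_affine_eq_zero {v : ℝ → ℝ} (hv : ¬ v =ᵐ[volume] 0) {a b : ℂ}
    (h : ∀ᵐ x : ℝ, (v x : ℂ) * (a + b * x) = 0) : b = 0 := by
  by_contra hb
  refine hv ?_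
  filter_upwards [h, volume.ae_ne (-a / b).re] with x hx hne
  refine Complex.ofReal_eq_zero.mp <| (mul_eq_zero.mp hx).resolve_right fun hroot => hne ?_
  have hx_root : (x : ℂ) = -a / b := by
    rw [eq_div_iff hb]
    linear_combination hroot
  rw [← hx_root, Complex.ofReal_re]

section Moments

variable {g : ℝ → ℂ} (hg₀ : Integrable g) (hg₁ : Integrable fun y : ℝ => (y : ℂ) * g y)
  (hg₂ : Integrable fun y : ℝ => (y : ℂ) ^ 2 * g y)

include hg₀ hg₁ hg₂ in
lemma integral_sq_dist_mul (x : ℝ) :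
    ∫ y : ℝ, ((|x - y| ^ 2 : ℝ) : ℂ) * g y
      = (x : ℂ) ^ 2 * (∫ y, g y) - 2 * x * (∫ y : ℝ, (y : ℂ) * g y)
        + ∫ y : ℝ, (y : ℂ) ^ 2 * g y := by
  have hexpand : (fun y : ℝ => ((|x - y| ^ 2 : ℝ) : ℂ) * g y)
      = fun y => ((x : ℂ) ^ 2 * g y - 2 * x * ((y : ℂ) * g y)) + (y : ℂ) ^ 2 * g y := by
    funext y
    rw [sq_abs]
    push_cast
    ring
  have hlow : Integrable fun y : ℝ => (x : ℂ) ^ 2 * g y - 2 * x * ((y : ℂ) * g y) :=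
    (hg₀.const_mul _).sub (hg₁.const_mul _)
  rw [hexpand, integral_add hlow hg₂, integral_sub (hg₀.const_mul _) (hg₁.const_mul _),
    integral_const_mul, integral_const_mul]

include hg₀ hg₁ hg₂ in
lemma integral_integral_conj_mul_sq_dist_mul (h₀ : ∫ y, g y = 0) :
    ∫ x : ℝ, ∫ y : ℝ, (starRingEnd ℂ) (g x) * ((|x - y| ^ 2 : ℝ) : ℂ) * g y
      = -2 * ((‖∫ y : ℝ, (y : ℂ) * g y‖ : ℝ) : ℂ) ^ 2 := by
  set m₁ := ∫ y : ℝ, (y : ℂ) * g y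
  set m₂ := ∫ y : ℝ, (y : ℂ) ^ 2 * g y
  have hinner : ∀ x : ℝ, ∫ y : ℝ, (starRingEnd ℂ) (g x) * ((|x - y| ^ 2 : ℝ) : ℂ) * g y
      = (starRingEnd ℂ) ((starRingEnd ℂ) m₂ * g x - 2 * (starRingEnd ℂ) m₁ * ((x : ℂ) * g x)) := by
    intro x
    simp_rw [mul_assoc, integral_const_mul, integral_sq_dist_mul hg₀ hg₁ hg₂, h₀]
    simp only [map_sub, map_mul, Complex.conj_conj, Complex.conj_ofReal, map_ofNat]
    ring
  simp_rw [hinner]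
  rw [integral_conj, integral_sub (hg₀.const_mul _) (hg₁.const_mul _), integral_const_mul,
    integral_const_mul, h₀]
  simp only [mul_zero, zero_sub, map_neg, map_mul, Complex.conj_conj, map_ofNat]
  change -(2 * m₁ * (starRingEnd ℂ) m₁) = _
  rw [mul_assoc, Complex.mul_conj']
  ring

include hg₀ hg₁ hg₂ in
lemma exists_ae_mul_integral_sq_dist_mul_eq_const_mul_iff {v : ℝ → ℝ}
    (hv : ¬ v =ᵐ[volume] 0) (h₀ : ∫ y, g y = 0) :
    (∃ c : ℂ, (fun x : ℝ => (v x : ℂ) * ∫ y : ℝ, ((|x - y| ^ 2 : ℝ) : ℂ) * g y)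
        =ᵐ[volume] fun x : ℝ => c * (v x : ℂ))
      ↔ ∫ y : ℝ, (y : ℂ) * g y = 0 := by
  simp_rw [integral_sq_dist_mul hg₀ hg₁ hg₂, h₀, mul_zero, zero_sub, neg_add_eq_sub]
  constructor
  · rintro ⟨c, hc⟩
    have hslope := eq_zero_of_ae_mul_affine_eq_zero hv
      (hc.mono fun x hx => by linear_combination hx : ∀ᵐ x : ℝ,
        (v x : ℂ) * ((∫ y : ℝ, (y : ℂ) ^ 2 * g y) - c + (-2 * ∫ y : ℝ, (y : ℂ) * g y) * x) = 0)
    simpa using hslope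
  · intro h₁
    exact ⟨∫ y : ℝ, (y : ℂ) ^ 2 * g y, Filter.Eventually.of_forall fun x => by
      simp only [h₁]; ring⟩

end Moments

theorem stmt13_general
    (v : ℝ → ℝ) (hv_meas : Measurable v)
    (hv_ne : ¬ v =ᵐ[volume] 0)
    (hv_int : Integrable (fun x : ℝ => (1 + |x|) ^ 4 * (v x) ^ 2))
    (f : ℝ → ℂ) (hf : MemLp f 2 (volume : Measure ℝ))
    (h0 : (∫ x : ℝ, (v x : ℂ) * f x) = 0) :
    (∫ x : ℝ, ∫ y : ℝ,
        (starRingEnd ℂ) ((v x : ℂ) * f x) * ((|x - y| ^ 2 : ℝ) : ℂ) * ((v y : ℂ) * f y)) =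
      -2 * ((‖∫ x : ℝ, (x : ℂ) * (v x : ℂ) * f x‖ : ℝ) : ℂ) ^ 2 ∧
    ((∃ c : ℂ,
        (fun x : ℝ => (v x : ℂ) * ∫ y : ℝ, ((|x - y| ^ 2 : ℝ) : ℂ) * (v y : ℂ) * f y)
          =ᵐ[volume] fun x : ℝ => c * (v x : ℂ)) ↔
      (∫ x : ℝ, (x : ℂ) * (v x : ℂ) * f x) = 0) := by
  have hg : AEStronglyMeasurable (fun x : ℝ => (v x : ℂ) * f x) volume :=
    hv_meas.complex_ofReal.aestronglyMeasurable.mul hf.1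
  have hw := integrable_weight_mul_norm_mul hv_meas hv_int hf
  have hg₀ : Integrable fun x : ℝ => (v x : ℂ) * f x := by
    simpa using integrable_ofReal_pow_mul_of_integrable_weight hg hw (k := 0) (by norm_num)
  have hg₁ : Integrable fun x : ℝ => (x : ℂ) * ((v x : ℂ) * f x) := by
    simpa using integrable_ofReal_pow_mul_of_integrable_weight hg hw (k := 1) (by norm_num)
  have hg₂ := integrable_ofReal_pow_mul_of_integrable_weight hg hw (k := 2) le_rfl
  simp_rw [mul_assoc _ (v _ : ℂ)]
  exact ⟨integral_integral_conj_mul_sq_dist_mul hg₀ hg₁ hg₂ h0,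
    exists_ae_mul_integral_sq_dist_mul_eq_const_mul_iff hg₀ hg₁ hg₂ hv_ne h0⟩

/-- Lemma 4.1 (1): for `f ∈ L²(ℝ)` orthogonal to `v`
(`∫ v f = 0`), one has
`∬ conj(v(x)f(x)) |x−y|² v(y)f(y) dy dx = −2 |∫ x v(x) f(x) dx|²`;
consequently `v(·)∫|·−y|²v(y)f(y)dy` lies in `span{v}` in `L²` (i.e. `Q v G₋₁ v Q f = 0`)
if and only if `∫ x v f = 0`, so the kernel of `Q v G₋₁ v Q` on `QL²(ℝ)` is exactly
`S₀L²(ℝ) = {f : ∫ v f = ∫ x v f = 0}`. -/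
theorem stmt13
    (v : ℝ → ℝ) (hv_meas : Measurable v) (hv_nonneg : ∀ x, 0 ≤ v x)
    (hv_ne : ¬ v =ᵐ[volume] 0)
    (hv_int : Integrable (fun x : ℝ => (1 + |x|) ^ 4 * (v x) ^ 2))
    (f : ℝ → ℂ) (hf : MemLp f 2 (volume : Measure ℝ))
    (h0 : (∫ x : ℝ, (v x : ℂ) * f x) = 0) :
    (∫ x : ℝ, ∫ y : ℝ,
        (starRingEnd ℂ) ((v x : ℂ) * f x) * ((|x - y| ^ 2 : ℝ) : ℂ) * ((v y : ℂ) * f y)) =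
      -2 * ((‖∫ x : ℝ, (x : ℂ) * (v x : ℂ) * f x‖ : ℝ) : ℂ) ^ 2 ∧
    ((∃ c : ℂ,
        (fun x : ℝ => (v x : ℂ) * ∫ y : ℝ, ((|x - y| ^ 2 : ℝ) : ℂ) * (v y : ℂ) * f y)
          =ᵐ[volume] fun x : ℝ => c * (v x : ℂ)) ↔
      (∫ x : ℝ, (x : ℂ) * (v x : ℂ) * f x) = 0) :=
  stmt13_general v hv_meas hv_ne hv_int f hf h0
end

section
/- Let V : ℝ → ℝ be measurable with |V(x)| ≤ C₀(1+|x|)^{−β} for some β > 25 and C₀ > 0; set v = |V|^{1/2} and let U : ℝ → {−1, 1} satisfy V = U v². If f ∈ L²(ℝ) satisfies ∫_ℝ x^k v(x) f(x) dx = 0 for k = 0, 1, 2, 3 and U(x) f(x) + (1/12) v(x) ∫_ℝ |x−y|³ v(y) f(y) dy = 0 for a.e. x ∈ ℝ, then f = 0 a.e. In other words, S₃L²(ℝ) = {0}. -/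
/-!
With `w = v f`, the vanishing of the first four moments of `w` turns `∫ |x - y|³ w(y) dy` into
`2 ψ(x)`, where `ψ(x) = ∫_{y > x} (y - x)³ w(y) dy`: indeed `|x - y|³ - (x - y)³` vanishes for
`y < x`, and `(x - y)³` integrates to zero against `w`. The equation `T₀ f = 0` then reads
`w = -(V / 6) ψ`, so `ψ` solves a homogeneous Volterra equation on `(x, ∞)` with kernel
`(y - x)³ V(y) / 6`. Such a solution vanishes: first on a half-line `[x₀, ∞)` on which the
kernel has mass at most `1/2`, then on successive intervals of a fixed length `δ` to the left,
on which it again has mass at most `1/2`. Hence `f = -U v ψ / 6 = 0`.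
-/

open MeasureTheory Set Filter Topology

theorem abs_sub_pow_le_one_add_abs_pow_mul (x y : ℝ) (n : ℕ) :
    |y - x| ^ n ≤ (1 + |x|) ^ n * (1 + |y|) ^ n := by
  rw [← mul_pow]
  refine pow_le_pow_left₀ (abs_nonneg _) ?_ n
  exact (abs_sub _ _).trans (by nlinarith [abs_nonneg x, abs_nonneg y])

theorem integrable_one_add_abs_pow_mul_of_abs_le {g : ℝ → ℝ} {C β : ℝ} {n : ℕ}
    (hg : AEStronglyMeasurable g) (hgC : ∀ y, |g y| ≤ C * (1 + |y|) ^ (-β)) (hβ : n + 1 < β) :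
    Integrable (fun y => (1 + |y|) ^ n * g y) := by
  have hint : Integrable (fun y : ℝ => C * (1 + |y|) ^ ((n : ℝ) - β)) := by
    have := integrable_one_add_norm (E := ℝ) (μ := volume) (r := β - n) (by simp; linarith)
    simpa [neg_sub] using this.const_mul C
  refine hint.mono' (by fun_prop) (Eventually.of_forall fun y => ?_)
  have hy : 0 < 1 + |y| := by positivity
  rw [norm_mul, norm_pow, Real.norm_of_nonneg hy.le, Real.norm_eq_abs]
  calc (1 + |y|) ^ n * |g y| ≤ (1 + |y|) ^ n * (C * (1 + |y|) ^ (-β)) :=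
        mul_le_mul_of_nonneg_left (hgC y) (by positivity)
    _ = C * (1 + |y|) ^ ((n : ℝ) - β) := by
        rw [Real.rpow_sub hy, Real.rpow_natCast, Real.rpow_neg hy.le]; ring

theorem integrable_one_add_abs_pow_mul_norm_ofReal_mul {v : ℝ → ℝ} {f : ℝ → ℂ} {C β : ℝ} {n : ℕ}
    (hv : AEStronglyMeasurable v) (hv0 : ∀ y, 0 ≤ v y)
    (hvC : ∀ y, v y ^ 2 ≤ C * (1 + |y|) ^ (-β)) (hβ : 2 * n + 1 < β) (hf : MemLp f 2) :
    Integrable (fun y => (1 + |y|) ^ n * ‖(v y : ℂ) * f y‖) := by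
  have hv2 : MemLp (fun y => (1 + |y|) ^ n * v y) 2 := by
    refine (memLp_two_iff_integrable_sq (by fun_prop)).2 ?_
    have := integrable_one_add_abs_pow_mul_of_abs_le (n := 2 * n) (hv.pow 2)
      (fun y => by rw [abs_of_nonneg (sq_nonneg _)]; exact hvC y) (by push_cast; linarith)
    exact this.congr (Eventually.of_forall fun y => by simp only [Pi.pow_apply]; ring)
  refine (hv2.integrable_mul hf.norm).congr (Eventually.of_forall fun y => ?_)
  simp [abs_of_nonneg (hv0 y), mul_assoc]

theorem eq_zero_of_le_integral_Ioi_of_integral_le_half {φ m : ℝ → ℝ} {K : ℝ → ℝ → ℝ} {b B : ℝ}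
    (hφ0 : ∀ x, b ≤ x → 0 ≤ φ x) (hφB : ∀ x, b ≤ x → φ x ≤ B)
    (hK0 : ∀ x y, b ≤ x → x < y → 0 ≤ K x y) (hKm : ∀ x y, b ≤ x → x < y → K x y ≤ m y)
    (hm : IntegrableOn m (Ioi b)) (hm_half : ∫ y in Ioi b, m y ≤ 1 / 2)
    (hφK : ∀ x, b ≤ x → φ x ≤ ∫ y in Ioi x, K x y * φ y) {x : ℝ} (hx : b ≤ x) : φ x = 0 := by
  have hm0 : ∀ y, b < y → 0 ≤ m y := fun y hy => (hK0 b y le_rfl hy).trans (hKm b y le_rfl hy)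
  have halve : ∀ t, (∀ y, b ≤ y → φ y ≤ t) → ∀ x, b ≤ x → φ x ≤ t / 2 := by
    intro t ht x hx
    have ht0 : 0 ≤ t := (hφ0 b le_rfl).trans (ht b le_rfl)
    calc φ x ≤ ∫ y in Ioi x, K x y * φ y := hφK x hx
      _ ≤ ∫ y in Ioi x, m y * t := by
        refine integral_mono_of_nonneg ?_ ((hm.mono_set (Ioi_subset_Ioi hx)).mul_const t) ?_
        all_goals filter_upwards [ae_restrict_mem measurableSet_Ioi] with y (hy : x < y)
        · exact mul_nonneg (hK0 x y hx hy) (hφ0 y (hx.trans hy.le))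
        · exact mul_le_mul (hKm x y hx hy) (ht y (hx.trans hy.le)) (hφ0 y (hx.trans hy.le))
            (hm0 y (hx.trans_lt hy))
      _ ≤ (∫ y in Ioi b, m y) * t := by
        rw [integral_mul_const]
        refine mul_le_mul_of_nonneg_right (setIntegral_mono_set hm ?_
          (Ioi_subset_Ioi hx).eventuallyLE) ht0
        filter_upwards [ae_restrict_mem measurableSet_Ioi] with y hy using hm0 y hy
      _ ≤ t / 2 := by nlinarith
  have hpow : ∀ n : ℕ, ∀ x, b ≤ x → φ x ≤ B / 2 ^ n := by
    intro n
    induction n with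
    | zero => simpa using hφB
    | succ n ih => intro x hx; rw [pow_succ, ← div_div]; exact halve _ ih x hx
  have hlim : Tendsto (fun n : ℕ => B / 2 ^ n) atTop (𝓝 0) :=
    tendsto_const_nhds.div_atTop (tendsto_pow_atTop_atTop_of_one_lt one_lt_two)
  exact le_antisymm (ge_of_tendsto hlim (Eventually.of_forall fun n => hpow n x hx)) (hφ0 x hx)

theorem exists_forall_setIntegral_lt_of_measure_eq {q : ℝ → ℝ} (hq : Integrable q) {ε : ℝ}
    (hε : 0 < ε) :
    ∃ δ ∈ Ioc (0 : ℝ) 1, ∀ s, volume s = ENNReal.ofReal δ → ∫ y in s, q y < ε := by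
  have habs : ∀ᶠ s in comap volume (𝓝 0), ∫ y in s, q y < ε :=
    (hq.tendsto_setIntegral_nhds_zero (s := id) tendsto_comap).eventually (gt_mem_nhds hε)
  have hδ : ∀ᶠ δ in 𝓝 (0 : ℝ), ∀ s, volume s = ENNReal.ofReal δ → ∫ y in s, q y < ε := by
    rw [eventually_comap] at habs
    have := ENNReal.tendsto_ofReal (tendsto_id (x := 𝓝 (0 : ℝ)))
    rw [ENNReal.ofReal_zero] at this
    exact this.eventually habs
  replace hδ : ∀ᶠ δ in 𝓝[>] (0 : ℝ), _ := hδ.filter_mono nhdsWithin_le_nhds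
  obtain ⟨δ, hδP, hδ⟩ := (hδ.and (Ioc_mem_nhdsGT zero_lt_one)).exists
  exact ⟨δ, hδ, hδP⟩

theorem eq_zero_of_le_integral_Ioi_pow_mul {φ q : ℝ → ℝ} {n : ℕ}
    (hφ0 : ∀ x, 0 ≤ φ x) (hφB : ∀ b, ∃ B, ∀ x, b ≤ x → φ x ≤ B)
    (hq0 : ∀ y, 0 ≤ q y) (hq : Integrable (fun y => (1 + |y|) ^ n * q y))
    (hφq : ∀ x, φ x ≤ ∫ y in Ioi x, (y - x) ^ n * q y * φ y) (x : ℝ) : φ x = 0 := by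
  have hq_int : Integrable q := by
    refine (hq.bdd_mul (c := 1) (f := fun y => ((1 + |y|) ^ n)⁻¹) (by fun_prop)
      (Eventually.of_forall fun y => ?_)).congr (Eventually.of_forall fun y => ?_)
    · rw [norm_inv, norm_pow, Real.norm_of_nonneg (by positivity)]
      exact inv_le_one_of_one_le₀ (one_le_pow₀ (by simp))
    · simp [inv_mul_cancel_left₀ (pow_ne_zero n (by positivity : (1 + |y|) ≠ 0))]
  obtain ⟨x₀, hx₀, hx₀_tail⟩ : ∃ x₀ : ℝ, 0 ≤ x₀ ∧ ∫ y in Ioi x₀, (1 + |y|) ^ n * q y ≤ 1 / 2 := by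
    have hlim := tendsto_setIntegral_of_antitone (μ := volume) (fun x => measurableSet_Ioi)
      (fun x y (hxy : x ≤ y) => Ioi_subset_Ioi hxy) ⟨0, hq.integrableOn⟩
    have hempty : ⋂ y : ℝ, Ioi y = ∅ := iInter_eq_empty_iff.2 fun y => ⟨y, lt_irrefl y⟩
    rw [hempty, setIntegral_empty] at hlim
    obtain ⟨x₀, h, hx₀⟩ := ((hlim.eventually (ge_mem_nhds (by norm_num : (0:ℝ) < 1 / 2))).and
      (eventually_ge_atTop 0)).exists
    exact ⟨x₀, hx₀, h⟩
  have h_tail : ∀ x, x₀ ≤ x → φ x = 0 := fun x hx =>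
    eq_zero_of_le_integral_Ioi_of_integral_le_half (fun x _ => hφ0 x) (hφB x₀).choose_spec
      (K := fun x y => (y - x) ^ n * q y)
      (fun x y _ hxy => mul_nonneg (pow_nonneg (sub_nonneg.2 hxy.le) n) (hq0 y))
      (fun x y hx hxy => mul_le_mul_of_nonneg_right (pow_le_pow_left₀ (sub_nonneg.2 hxy.le)
        (by linarith [le_abs_self y]) n) (hq0 y))
      hq.integrableOn hx₀_tail (fun x _ => hφq x) hx
  obtain ⟨δ, ⟨hδ0, hδ1⟩, hδ⟩ := exists_forall_setIntegral_lt_of_measure_eq hq_int one_half_pos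
  have h_step : ∀ b, (∀ x, b + δ ≤ x → φ x = 0) → ∀ x, b ≤ x → φ x = 0 := by
    intro b hb x hx
    -- `φ` vanishes from `b + δ` on, so the kernel may be cut off there.
    have hm0 : ∀ y, 0 ≤ (Iio (b + δ)).indicator q y := indicator_nonneg fun y _ => hq0 y
    refine eq_zero_of_le_integral_Ioi_of_integral_le_half (fun x _ => hφ0 x) (hφB b).choose_spec
      (m := (Iio (b + δ)).indicator q) (K := fun x y => (y - x) ^ n * (Iio (b + δ)).indicator q y)
      (fun x y _ hxy => mul_nonneg (pow_nonneg (sub_nonneg.2 hxy.le) n) (hm0 y)) ?_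
      (hq_int.integrableOn.indicator measurableSet_Iio) ?_ ?_ hx
    · intro x y hx hxy
      by_cases hy : y < b + δ
      · exact mul_le_of_le_one_left (hm0 y)
          (pow_le_one₀ (sub_nonneg.2 hxy.le) (by linarith))
      · simp [indicator_of_notMem (show y ∉ Iio (b + δ) from hy)]
    · rw [setIntegral_indicator measurableSet_Iio, Ioi_inter_Iio]
      exact (hδ _ (by simp [Real.volume_Ioo])).le
    · intro x _
      refine (hφq x).trans_eq (setIntegral_congr_fun measurableSet_Ioi fun y _ => ?_)
      by_cases hy : y < b + δ
      · simp [indicator_of_mem (show y ∈ Iio (b + δ) from hy)]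
      · simp [hb y (not_lt.1 hy)]
  have h_iter : ∀ k : ℕ, ∀ x, x₀ - k * δ ≤ x → φ x = 0 := by
    intro k
    induction k with
    | zero => simpa using h_tail
    | succ k ih => exact h_step _ fun x hx => ih x (by push_cast at hx ⊢; linarith)
  obtain ⟨k, hk⟩ := exists_nat_ge ((x₀ - x) / δ)
  exact h_iter k x (by rw [div_le_iff₀ hδ0] at hk; linarith)

noncomputable def cubicTail (w : ℝ → ℂ) (x : ℝ) : ℂ :=
  ∫ y in Ioi x, (((y - x) ^ 3 : ℝ) : ℂ) * w y

section

variable {w : ℝ → ℂ}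

theorem integrable_ofReal_mul_of_abs_le {n : ℕ} (hwm : AEStronglyMeasurable w)
    (hw : Integrable (fun y => (1 + |y|) ^ n * ‖w y‖)) {p : ℝ → ℝ} (hp : Continuous p) {D : ℝ}
    (hpD : ∀ y, |p y| ≤ D * (1 + |y|) ^ n) :
    Integrable (fun y => (p y : ℂ) * w y) := by
  refine (hw.const_mul D).mono' ((Complex.continuous_ofReal.comp hp).aestronglyMeasurable.mul hwm)
    (Eventually.of_forall fun y => ?_)
  rw [norm_mul, Complex.norm_real, Real.norm_eq_abs, ← mul_assoc]
  exact mul_le_mul_of_nonneg_right (hpD y) (norm_nonneg _)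

theorem integral_sub_pow_mul_eq_zero {n : ℕ}
    (hint : ∀ k ≤ n, Integrable (fun y : ℝ => (y : ℂ) ^ k * w y))
    (hmom : ∀ k ≤ n, ∫ y : ℝ, (y : ℂ) ^ k * w y = 0) (x : ℂ) :
    ∫ y : ℝ, (x - y) ^ n * w y = 0 := by
  have hexp : ∀ y : ℝ, (x - y) ^ n * w y = ∑ m ∈ Finset.range (n + 1),
      (-1) ^ (m + n) * x ^ m * n.choose m * ((y : ℂ) ^ (n - m) * w y) := fun y => by
    rw [sub_pow, Finset.sum_mul]
    exact Finset.sum_congr rfl fun m _ => by ring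
  simp_rw [hexp]
  rw [integral_finsetSum _ fun m _ => (hint _ (Nat.sub_le n m)).const_mul _]
  refine Finset.sum_eq_zero fun m _ => ?_
  rw [integral_const_mul, hmom _ (Nat.sub_le n m), mul_zero]

theorem integral_abs_sub_pow_three_mul_eq (hwm : AEStronglyMeasurable w)
    (hw : Integrable (fun y => (1 + |y|) ^ 3 * ‖w y‖))
    (hmom : ∀ k ≤ 3, ∫ y : ℝ, (y : ℂ) ^ k * w y = 0) (x : ℝ) :
    ∫ y, ((|x - y| ^ 3 : ℝ) : ℂ) * w y = 2 * cubicTail w x := by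
  have hpoly {p : ℝ → ℝ} (hp : Continuous p) (hpD : ∀ y, |p y| ≤ (1 + |x|) ^ 3 * (1 + |y|) ^ 3) :
      Integrable (fun y => (p y : ℂ) * w y) :=
    integrable_ofReal_mul_of_abs_le hwm hw hp hpD
  have hcube : ∫ y, (((x - y) ^ 3 : ℝ) : ℂ) * w y = 0 := by
    push_cast
    refine integral_sub_pow_mul_eq_zero (fun k hk => ?_) hmom x
    have := integrable_ofReal_mul_of_abs_le hwm hw (p := fun y => y ^ k) (D := 1) (by fun_prop)
      fun y => by
        rw [one_mul, abs_pow]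
        exact (pow_le_pow_left₀ (abs_nonneg y) (by linarith [abs_nonneg y]) k).trans
          (pow_le_pow_right₀ (by linarith [abs_nonneg y]) hk)
    simpa using this
  have hsplit : ∀ y, ((|x - y| ^ 3 : ℝ) : ℂ) * w y = (((x - y) ^ 3 : ℝ) : ℂ) * w y
      + (Ioi x).indicator (fun y => 2 * ((((y - x) ^ 3 : ℝ) : ℂ) * w y)) y := by
    intro y
    rcases le_or_gt y x with h | h
    · rw [indicator_of_notMem (show y ∉ Ioi x from not_lt.2 h), abs_of_nonneg (sub_nonneg.2 h)]
      simp
    · rw [indicator_of_mem (show y ∈ Ioi x from h), abs_of_neg (sub_neg.2 h)]; push_cast; ring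
  simp_rw [hsplit]
  rw [integral_add (hpoly (by fun_prop) fun y => ?_)
      (((hpoly (by fun_prop) fun y => ?_).const_mul 2).indicator measurableSet_Ioi),
    hcube, integral_indicator measurableSet_Ioi, integral_const_mul, zero_add, cubicTail]
  · rw [abs_pow, abs_sub_comm]; exact abs_sub_pow_le_one_add_abs_pow_mul x y 3
  · rw [abs_pow]; exact abs_sub_pow_le_one_add_abs_pow_mul x y 3

theorem norm_cubicTail_le (x : ℝ) :
    ‖cubicTail w x‖ ≤ ∫ y in Ioi x, (y - x) ^ 3 * ‖w y‖ := by
  refine (norm_integral_le_integral_norm _).trans_eq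
    (setIntegral_congr_fun measurableSet_Ioi fun y (hy : x < y) => ?_)
  rw [norm_mul, Complex.norm_real, Real.norm_of_nonneg (pow_nonneg (sub_nonneg.2 hy.le) 3)]

theorem exists_norm_cubicTail_le (hw : Integrable (fun y => (1 + |y|) ^ 3 * ‖w y‖)) (b : ℝ) :
    ∃ B, ∀ x, b ≤ x → ‖cubicTail w x‖ ≤ B := by
  refine ⟨(1 + |b|) ^ 3 * ∫ y, (1 + |y|) ^ 3 * ‖w y‖, fun x hx => (norm_cubicTail_le x).trans ?_⟩
  calc ∫ y in Ioi x, (y - x) ^ 3 * ‖w y‖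
      ≤ ∫ y in Ioi x, (1 + |b|) ^ 3 * ((1 + |y|) ^ 3 * ‖w y‖) := by
        refine integral_mono_of_nonneg ?_ (hw.integrableOn.const_mul _) ?_
        all_goals filter_upwards [ae_restrict_mem measurableSet_Ioi] with y (hy : x < y)
        · exact mul_nonneg (pow_nonneg (sub_nonneg.2 hy.le) 3) (norm_nonneg _)
        · rw [← mul_assoc]
          refine mul_le_mul_of_nonneg_right ?_ (norm_nonneg _)
          calc (y - x) ^ 3 ≤ |y - b| ^ 3 :=
                pow_le_pow_left₀ (sub_nonneg.2 hy.le)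
                  ((sub_le_sub_left hx y).trans (le_abs_self _)) 3
            _ ≤ _ := abs_sub_pow_le_one_add_abs_pow_mul b y 3
    _ ≤ (1 + |b|) ^ 3 * ∫ y, (1 + |y|) ^ 3 * ‖w y‖ := by
        rw [integral_const_mul]
        exact mul_le_mul_of_nonneg_left (setIntegral_le_integral hw
          (Eventually.of_forall fun y => by positivity)) (by positivity)

theorem cubicTail_eq_zero_of_ae_eq {q : ℝ → ℝ}
    (hw : Integrable (fun y => (1 + |y|) ^ 3 * ‖w y‖))
    (hq : Integrable (fun y => (1 + |y|) ^ 3 * q y))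
    (hwq : w =ᵐ[volume] fun y => (q y : ℂ) * cubicTail w y) (x : ℝ) : cubicTail w x = 0 := by
  refine norm_eq_zero.1 (eq_zero_of_le_integral_Ioi_pow_mul (φ := fun x => ‖cubicTail w x‖)
    (q := fun y => |q y|) (n := 3) (fun x => norm_nonneg _) (exists_norm_cubicTail_le hw)
    (fun y => abs_nonneg _) ?_ (fun x => (norm_cubicTail_le x).trans_eq ?_) x)
  · refine hq.norm.congr (Eventually.of_forall fun y => ?_)
    simp [abs_of_nonneg (by positivity : (0 : ℝ) ≤ 1 + |y|)]
  · refine setIntegral_congr_ae measurableSet_Ioi ?_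
    filter_upwards [hwq] with y hy _
    rw [hy, norm_mul, Complex.norm_real, Real.norm_eq_abs, mul_assoc]

end

theorem stmt14_general
    (V : ℝ → ℝ) (hV_meas : Measurable V)
    (β C₀ : ℝ) (hβ : 25 < β)
    (hV_decay : ∀ x : ℝ, |V x| ≤ C₀ * (1 + |x|) ^ (-β))
    (v : ℝ → ℝ) (hv : ∀ x, v x = Real.sqrt |V x|)
    (U : ℝ → ℝ) (hU : ∀ x, U x = 1 ∨ U x = -1) (hUV : ∀ x, V x = U x * (v x) ^ 2)
    (f : ℝ → ℂ) (hf : MemLp f 2 (volume : Measure ℝ))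
    (hmom : ∀ k : ℕ, k ≤ 3 → (∫ x : ℝ, (x : ℂ) ^ k * (v x : ℂ) * f x) = 0)
    (hT₀ : ∀ᵐ x : ℝ ∂volume,
      (U x : ℂ) * f x +
        (1/12 : ℂ) * (v x : ℂ) * ∫ y : ℝ, ((|x - y| ^ 3 : ℝ) : ℂ) * (v y : ℂ) * f y = 0) :
    f =ᵐ[volume] 0 := by
  have hv_meas : Measurable v := funext hv ▸ hV_meas.abs.sqrt
  have hv0 : ∀ x, 0 ≤ v x := fun x => hv x ▸ Real.sqrt_nonneg _
  have hv_sq : ∀ x, v x ^ 2 = |V x| := fun x => by rw [hv x, Real.sq_sqrt (abs_nonneg _)]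
  set w : ℝ → ℂ := fun y => (v y : ℂ) * f y with hw_def
  have hw : Integrable (fun y => (1 + |y|) ^ 3 * ‖w y‖) :=
    integrable_one_add_abs_pow_mul_norm_ofReal_mul hv_meas.aestronglyMeasurable hv0
      (fun y => hv_sq y ▸ hV_decay y) (by push_cast; linarith) hf
  have hψ : ∀ x, ∫ y : ℝ, ((|x - y| ^ 3 : ℝ) : ℂ) * (v y : ℂ) * f y = 2 * cubicTail w x := by
    have hwm : AEStronglyMeasurable w :=
      (Complex.measurable_ofReal.comp hv_meas).aestronglyMeasurable.mul hf.aestronglyMeasurable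
    simpa only [hw_def, mul_assoc] using integral_abs_sub_pow_three_mul_eq hwm hw
      (fun k hk => by simpa only [mul_assoc] using hmom k hk)
  have hf_eq : f =ᵐ[volume] fun x => -((U x : ℂ) * v x / 6) * cubicTail w x := by
    filter_upwards [hT₀] with x hx
    have hU2 : (U x : ℂ) ^ 2 = 1 := by rcases hU x with h | h <;> simp [h]
    rw [hψ x] at hx
    linear_combination (U x : ℂ) * hx - f x * hU2
  have hVq : Integrable (fun y => (1 + |y|) ^ 3 * (-V y / 6)) :=
    ((integrable_one_add_abs_pow_mul_of_abs_le (n := 3) hV_meas.aestronglyMeasurable hV_decay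
      (by push_cast; linarith)).neg.div_const 6).congr
      (Eventually.of_forall fun y => by simp only [Pi.neg_apply]; ring)
  have hψ0 : ∀ x, cubicTail w x = 0 := cubicTail_eq_zero_of_ae_eq hw hVq <| by
    filter_upwards [hf_eq] with y hy
    simp only [hw_def, hy, hUV y]
    push_cast
    ring
  filter_upwards [hf_eq] with x hx
  rw [hx, hψ0, mul_zero, Pi.zero_apply]

/-- Lemma 3.4: absence of the space `S₃L²(ℝ)`. If
`|V(x)| ≤ C₀(1+|x|)^{-β}` with `β > 25`, `v = |V|^{1/2}`, `U ∈ {−1,1}` with `V = Uv²`,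
and `f ∈ L²(ℝ)` satisfies the four moment conditions `∫ x^k v f = 0` (`k = 0,1,2,3`)
together with `T₀f = 0` a.e., where
`(T₀f)(x) = U(x)f(x) + (1/12) v(x) ∫ |x−y|³ v(y) f(y) dy`, then `f = 0` a.e.
In other words, `S₃L²(ℝ) = {0}`. -/
theorem stmt14
    (V : ℝ → ℝ) (hV_meas : Measurable V)
    (β C₀ : ℝ) (hβ : 25 < β) (hC₀ : 0 < C₀)
    (hV_decay : ∀ x : ℝ, |V x| ≤ C₀ * (1 + |x|) ^ (-β))
    (v : ℝ → ℝ) (hv : ∀ x, v x = Real.sqrt |V x|)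
    (U : ℝ → ℝ) (hU : ∀ x, U x = 1 ∨ U x = -1) (hUV : ∀ x, V x = U x * (v x) ^ 2)
    (f : ℝ → ℂ) (hf : MemLp f 2 (volume : Measure ℝ))
    (hmom : ∀ k : ℕ, k ≤ 3 → (∫ x : ℝ, (x : ℂ) ^ k * (v x : ℂ) * f x) = 0)
    (hT₀ : ∀ᵐ x : ℝ ∂volume,
      (U x : ℂ) * f x +
        (1/12 : ℂ) * (v x : ℂ) * ∫ y : ℝ, ((|x - y| ^ 3 : ℝ) : ℂ) * (v y : ℂ) * f y = 0) :
    f =ᵐ[volume] 0 :=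
  stmt14_general V hV_meas β C₀ hβ hV_decay v hv U hU hUV f hf hmom hT₀
end

section
/- Let V : ℝ → ℂ be measurable with ∫_ℝ (1+|y|)⁶ |V(y)| dy < ∞, and let φ : ℝ → ℂ be continuous with sup_{x∈ℝ} (1+|x|)^{−3} |φ(x)| < ∞ and φ(x) → 0 as x → +∞. If φ(x) = −(1/6) ∫_x^∞ (y−x)³ V(y) φ(y) dy for every x ∈ ℝ, then φ ≡ 0. -/
/-!
With the weight `w y = (1 + |y|)⁶ ‖V y‖`, which is integrable, a pointwise bound
`(y - x)³ ‖φ y‖ ≤ K (1 + |y|)⁶` on `(x, ∞)` turns the equation into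
`‖φ x‖ ≤ K/6 · ∫_{(x, ∞)} w`. Far to the right the tail of `w` has mass at most `3`, so the
weighted supremum of `‖φ‖ / (1 + |x|)³` over `[a, ∞)` is at most half of itself, hence zero.
Once `φ` vanishes on `(c, ∞)`, the same bound with `(y - x)³ ≤ h³` shows that the supremum of
`‖φ‖` over the compact interval `[c - h, c]` is at most half of itself as soon as
`h³ ∫ w ≤ 3`; stepping left by `h` at a time gives `φ ≡ 0`.
-/

open MeasureTheory Set Filter

noncomputable def cubicVolterra (V φ : ℝ → ℂ) (x : ℝ) : ℂ :=
  -(1/6 : ℂ) * ∫ y in Ioi x, (((y - x) ^ 3 : ℝ) : ℂ) * V y * φ y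

theorem le_zero_of_forall_le_imp_le_half {α : Type*} {s : Set α} {u : α → ℝ}
    (hbdd : BddAbove (u '' s)) (hu : ∀ K, (∀ y ∈ s, u y ≤ K) → ∀ y ∈ s, u y ≤ K / 2) :
    ∀ y ∈ s, u y ≤ 0 := by
  intro y hy
  set S := sSup (u '' s)
  have hS : ∀ z ∈ s, u z ≤ S / 2 := hu S fun z hz => le_csSup hbdd ⟨z, hz, rfl⟩
  have : S ≤ S / 2 := csSup_le ⟨u y, y, hy, rfl⟩ (by rintro _ ⟨z, hz, rfl⟩; exact hS z hz)
  linarith [hS y hy]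

section

variable {V φ : ℝ → ℂ}

theorem norm_le_of_eq_cubicVolterra
    (hV : Integrable (fun y : ℝ => (1 + |y|) ^ 6 * ‖V y‖)) {x K : ℝ}
    (hx : φ x = cubicVolterra V φ x)
    (hK : ∀ y ∈ Ioi x, (y - x) ^ 3 * ‖φ y‖ ≤ K * (1 + |y|) ^ 6) :
    ‖φ x‖ ≤ K / 6 * ∫ y in Ioi x, (1 + |y|) ^ 6 * ‖V y‖ := by
  have hint : ‖∫ y in Ioi x, (((y - x) ^ 3 : ℝ) : ℂ) * V y * φ y‖ ≤
      ∫ y in Ioi x, K * ((1 + |y|) ^ 6 * ‖V y‖) := by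
    refine norm_integral_le_of_norm_le (hV.const_mul K).integrableOn
      ((ae_restrict_iff' measurableSet_Ioi).mpr (ae_of_all _ fun y (hy : x < y) => ?_))
    have hxy : 0 ≤ (y - x) ^ 3 := pow_nonneg (sub_nonneg.mpr hy.le) 3
    calc ‖(((y - x) ^ 3 : ℝ) : ℂ) * V y * φ y‖ = (y - x) ^ 3 * ‖φ y‖ * ‖V y‖ := by
          rw [norm_mul, norm_mul, Complex.norm_real, Real.norm_of_nonneg hxy]; ring
      _ ≤ K * (1 + |y|) ^ 6 * ‖V y‖ := mul_le_mul_of_nonneg_right (hK y hy) (norm_nonneg _)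
      _ = K * ((1 + |y|) ^ 6 * ‖V y‖) := mul_assoc _ _ _
  calc ‖φ x‖ = 1 / 6 * ‖∫ y in Ioi x, (((y - x) ^ 3 : ℝ) : ℂ) * V y * φ y‖ := by
        rw [hx, cubicVolterra, norm_mul]; norm_num
    _ ≤ 1 / 6 * ∫ y in Ioi x, K * ((1 + |y|) ^ 6 * ‖V y‖) := by gcongr
    _ = K / 6 * ∫ y in Ioi x, (1 + |y|) ^ 6 * ‖V y‖ := by rw [integral_const_mul]; ring

theorem eq_zero_of_eq_cubicVolterra_of_tail_le
    (hV : Integrable (fun y : ℝ => (1 + |y|) ^ 6 * ‖V y‖))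
    (heq : ∀ x, φ x = cubicVolterra V φ x) (hφ : ∃ M : ℝ, ∀ x, ‖φ x‖ ≤ M * (1 + |x|) ^ 3)
    {a : ℝ} (ha0 : 0 ≤ a) (ha : ∫ y in Ioi a, (1 + |y|) ^ 6 * ‖V y‖ ≤ 3) :
    ∀ x ∈ Ici a, φ x = 0 := by
  obtain ⟨M, hM⟩ := hφ
  have hpos : ∀ y : ℝ, 0 < (1 + |y|) ^ 3 := fun y => by positivity
  have hle : ∀ x ∈ Ici a, ‖φ x‖ / (1 + |x|) ^ 3 ≤ 0 := by
    refine le_zero_of_forall_le_imp_le_half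
      ⟨M, by rintro _ ⟨x, -, rfl⟩; exact (div_le_iff₀ (hpos x)).mpr (hM x)⟩ ?_
    intro K hK x (hx : a ≤ x)
    have hK0 : 0 ≤ K := (div_nonneg (norm_nonneg _) (hpos a).le).trans (hK a (mem_Ici.2 le_rfl))
    have hbound : ∀ y ∈ Ioi x, (y - x) ^ 3 * ‖φ y‖ ≤ K * (1 + |y|) ^ 6 := by
      intro y (hy : x < y)
      have hyx : (y - x) ^ 3 ≤ (1 + |y|) ^ 3 := by
        gcongr; linarith [le_abs_self y]
      have hφy : ‖φ y‖ ≤ K * (1 + |y|) ^ 3 := (div_le_iff₀ (hpos y)).mp (hK y (hx.trans hy.le))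
      calc (y - x) ^ 3 * ‖φ y‖ ≤ (1 + |y|) ^ 3 * (K * (1 + |y|) ^ 3) := by gcongr
        _ = K * (1 + |y|) ^ 6 := by ring
    have htail : ∫ y in Ioi x, (1 + |y|) ^ 6 * ‖V y‖ ≤ 3 :=
      (setIntegral_mono_set hV.integrableOn (ae_of_all _ fun y => by positivity)
        (Ioi_subset_Ioi hx).eventuallyLE).trans ha
    calc ‖φ x‖ / (1 + |x|) ^ 3 ≤ ‖φ x‖ :=
          div_le_self (norm_nonneg _) (one_le_pow₀ (by linarith [abs_nonneg x]))
      _ ≤ K / 6 * ∫ y in Ioi x, (1 + |y|) ^ 6 * ‖V y‖ :=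
          norm_le_of_eq_cubicVolterra hV (heq x) hbound
      _ ≤ K / 2 := by nlinarith
  intro x hx
  have := hle x hx
  rw [div_le_iff₀ (hpos x), zero_mul] at this
  exact norm_le_zero_iff.mp this

theorem eq_zero_of_eq_cubicVolterra_of_eq_zero_Ioi
    (hV : Integrable (fun y : ℝ => (1 + |y|) ^ 6 * ‖V y‖))
    (heq : ∀ x, φ x = cubicVolterra V φ x) (hφ : Continuous φ)
    {c h : ℝ} (hh : h ^ 3 * ∫ y, (1 + |y|) ^ 6 * ‖V y‖ ≤ 3) (hc : ∀ y ∈ Ioi c, φ y = 0) :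
    ∀ x ∈ Ici (c - h), φ x = 0 := by
  have hle : ∀ x ∈ Icc (c - h) c, ‖φ x‖ ≤ 0 := by
    refine le_zero_of_forall_le_imp_le_half
      (isCompact_Icc.image_of_continuousOn hφ.norm.continuousOn).bddAbove ?_
    intro K hK x hx
    have hK0 : 0 ≤ K := (norm_nonneg _).trans (hK x hx)
    have hh0 : 0 ≤ h := by linarith [hx.1, hx.2]
    have hbound : ∀ y ∈ Ioi x, (y - x) ^ 3 * ‖φ y‖ ≤ h ^ 3 * K * (1 + |y|) ^ 6 := by
      intro y (hy : x < y)
      rcases le_or_gt y c with hyc | hyc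
      · have hyx : (y - x) ^ 3 ≤ h ^ 3 := by gcongr; linarith [hx.1]
        have hφy : ‖φ y‖ ≤ K := hK y ⟨by linarith [hx.1], hyc⟩
        calc (y - x) ^ 3 * ‖φ y‖ ≤ h ^ 3 * K * 1 := by
              rw [mul_one]; exact mul_le_mul hyx hφy (norm_nonneg _) (by positivity)
          _ ≤ h ^ 3 * K * (1 + |y|) ^ 6 := by
              gcongr
              exact one_le_pow₀ (by linarith [abs_nonneg y])
      · rw [hc y hyc, norm_zero, mul_zero]
        positivity
    calc ‖φ x‖ ≤ h ^ 3 * K / 6 * ∫ y in Ioi x, (1 + |y|) ^ 6 * ‖V y‖ :=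
          norm_le_of_eq_cubicVolterra hV (heq x) hbound
      _ ≤ h ^ 3 * K / 6 * ∫ y, (1 + |y|) ^ 6 * ‖V y‖ := by
          refine mul_le_mul_of_nonneg_left ?_ (by positivity)
          exact setIntegral_le_integral hV (ae_of_all _ fun y => by positivity)
      _ ≤ K / 2 := by nlinarith
  intro x (hx : c - h ≤ x)
  rcases le_or_gt x c with hxc | hxc
  · exact norm_le_zero_iff.mp (hle x ⟨hx, hxc⟩)
  · exact hc x hxc

end

theorem stmt15_general
    (V : ℝ → ℂ)
    (hV_int : Integrable (fun y : ℝ => (1 + |y|) ^ 6 * ‖V y‖))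
    (φ : ℝ → ℂ) (hφ_cont : Continuous φ)
    (hφ_bound : ∃ M : ℝ, ∀ x : ℝ, ‖φ x‖ ≤ M * (1 + |x|) ^ 3)
    (heq : ∀ x : ℝ, φ x =
      -(1/6 : ℂ) * ∫ y in Ioi x, (((y - x) ^ 3 : ℝ) : ℂ) * V y * φ y) :
    ∀ x : ℝ, φ x = 0 := by
  set J := ∫ y, (1 + |y|) ^ 6 * ‖V y‖
  obtain ⟨a, ha, ha0⟩ : ∃ a, ∫ y in Ioi a, (1 + |y|) ^ 6 * ‖V y‖ ≤ 3 ∧ 0 ≤ a :=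
    (((tendsto_integral_Ioi_zero tendsto_id).eventually (ge_mem_nhds (by norm_num))).and
      (eventually_ge_atTop 0)).exists
  have hsmall : ∀ᶠ h in nhds (0 : ℝ), h ^ 3 * J ≤ 3 :=
    (((continuous_pow 3).mul continuous_const).tendsto' 0 0 (by simp)).eventually
      (ge_mem_nhds (by norm_num))
  obtain ⟨h, hJ, hh⟩ : ∃ h, h ^ 3 * J ≤ 3 ∧ 0 < h :=
    ((hsmall.filter_mono nhdsWithin_le_nhds).and
      (self_mem_nhdsWithin : Ioi (0 : ℝ) ∈ nhdsWithin 0 (Ioi 0))).exists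
  have hstep : ∀ n : ℕ, ∀ x ∈ Ici (a - n * h), φ x = 0 := by
    intro n
    induction n with
    | zero => simpa using eq_zero_of_eq_cubicVolterra_of_tail_le hV_int heq hφ_bound ha0 ha
    | succ n ih =>
      have := eq_zero_of_eq_cubicVolterra_of_eq_zero_Ioi hV_int heq hφ_cont hJ
        fun y hy => ih y (mem_Ici_of_Ioi hy)
      simpa [add_mul, sub_add_eq_sub_sub] using this
  intro x
  obtain ⟨n, hn⟩ := exists_nat_ge ((a - x) / h)
  exact hstep n x (by rw [mem_Ici]; linarith [(div_le_iff₀ hh).mp hn])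

/-- Volterra/Gronwall step in Lemma 3.4: if
`∫ (1+|y|)⁶ |V(y)| dy < ∞`, `φ` is continuous with `sup (1+|x|)^{-3}|φ(x)| < ∞` and
`φ(x) → 0` as `x → +∞`, and `φ(x) = −(1/6) ∫_x^∞ (y−x)³ V(y) φ(y) dy` for every `x`,
then `φ ≡ 0`. -/
theorem stmt15
    (V : ℝ → ℂ) (hV_meas : Measurable V)
    (hV_int : Integrable (fun y : ℝ => (1 + |y|) ^ 6 * ‖V y‖))
    (φ : ℝ → ℂ) (hφ_cont : Continuous φ)
    (hφ_bound : ∃ M : ℝ, ∀ x : ℝ, ‖φ x‖ ≤ M * (1 + |x|) ^ 3)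
    (hφ_lim : Tendsto φ atTop (nhds 0))
    (heq : ∀ x : ℝ, φ x =
      -(1/6 : ℂ) * ∫ y in Ioi x, (((y - x) ^ 3 : ℝ) : ℂ) * V y * φ y) :
    ∀ x : ℝ, φ x = 0 :=
  stmt15_general V hV_int φ hφ_cont hφ_bound heq
end
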